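/- arXiv:0812.5082 — 6 statements merged into one kernel-verified Lean document; each statement's English description precedes it below -/
import Mathlib

section
/- The generalized character Θ = Σ_{k=0}^{n-1} (-1)^k χ^{(n-k,1^k)} of S_n vanishes on every element that is not an n-cycle, and takes the value n on every n-cycle. -/
/-!
The beta-set of the hook `(n-k, 1^k)` is `{n} ∪ [1, k]`. For `1 ≤ a < n` an `a`-hook can be
removed in at most two ways: the bead `n` moves to `n - a` (possible iff `a + k < n`, leg
length `0`), leaving the hook `(n-a, 1^k)`, or the bead `a` moves to `0` (possible iff `a ≤ k`,
leg length `a - 1`), leaving the hook `(n-a, 1^(k-a))` with `a` extra beads at the bottom.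
So by the Murnaghan–Nakayama rule the `k`-th term of the alternating sum on a cycle type
`a :: r` is `c k - c (k - a)` with `c k = (-1)^k χ^{(n-a,1^k)}(r)` (read as `0` outside
`0 ≤ k < n - a`), and the sum telescopes to `0`. On an `n`-cycle only the bead `n` moves,
with leg length `k`, so every term is `1`.
-/

/-- The beta-set (set of first-column hook lengths) of a partition given as a
weakly decreasing list of parts: the `i`-th part `a` contributes `a + (ℓ - 1 - i)`. -/
def betaSet (l : List ℕ) : Finset ℕ :=
  (l.mapIdx (fun i a => a + (l.length - 1 - i))).toFinset

/-- The leg length of the `a`-hook removed from the partition with beta-set `X`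
by replacing the beta-number `x` with `x - a`: the number of beta-numbers
strictly between `x - a` and `x`. -/
def legLen (X : Finset ℕ) (a x : ℕ) : ℕ :=
  (X.filter (fun y => x - a < y ∧ y < x)).card

/-- For a partition with beta-set `X` and a list `l = [a₁,…,a_k]`, the multiset of
the sums of leg lengths of the hooks removed along all `l`-paths of `X`, i.e. along
all ways of successively removing an `a₁`-hook, an `a₂`-hook, … ending at the
empty partition.  Removing an `a`-hook from a partition with beta-set `X`
corresponds to replacing some `x ∈ X` with `x - a ∉ X` (where `a ≤ x`). -/
def legSums : Finset ℕ → List ℕ → Multiset ℕ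
  | X, [] => if X = Finset.range X.card then {0} else 0
  | X, a :: r =>
      (X.filter (fun x => a ≤ x ∧ x - a ∉ X)).val.bind
        (fun x => (legSums (insert (x - a) (X.erase x)) r).map (fun L => legLen X a x + L))

/-- The number of `l`-paths in the partition with beta-set `X`:
the number of ways to successively remove hooks of lengths `a₁, a₂, …`
(for `l = [a₁,…,a_k]`) ending at the empty partition. -/
def numPaths (X : Finset ℕ) (l : List ℕ) : ℕ := (legSums X l).card

/-- Murnaghan–Nakayama evaluation: for partitions `lam`, `mu` given as weakly
decreasing lists, this is `Σ_paths (-1)^(sum of leg lengths)`, which by the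
Murnaghan–Nakayama formula equals the value `χ^lam(mu)` of the irreducible
character of the symmetric group indexed by `lam` on the class of cycle type `mu`. -/
def charList (lam mu : List ℕ) : ℤ :=
  ((legSums (betaSet lam) mu).map (fun L => (-1 : ℤ) ^ L)).sum

/-- The parts of a partition as a weakly decreasing list. -/
def sortedParts {n : ℕ} (mu : n.Partition) : List ℕ :=
  (Multiset.sort mu.parts (· ≤ ·)).reverse

/-- The value `χ^lam(mu)` of the irreducible character of `S_n` indexed by the
partition `lam` on the conjugacy class of cycle type `mu`, computed by the
Murnaghan–Nakayama formula. -/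
def charValue {n : ℕ} (lam mu : n.Partition) : ℤ :=
  charList (sortedParts lam) (sortedParts mu)

/-- The hook partition `(n-k, 1^k)` as a weakly decreasing list of parts. -/
def hookList (n k : ℕ) : List ℕ := (n - k) :: List.replicate k 1

open Finset

theorem betaSet_hookList {n k : ℕ} (hk : k ≤ n) :
    betaSet (hookList n k) = insert n (Icc 1 k) := by
  ext x
  simp only [betaSet, hookList, List.mem_toFinset, List.mem_mapIdx, List.length_cons,
    List.length_replicate, mem_insert, mem_Icc]
  constructor
  · rintro ⟨_ | i, hi, rfl⟩ <;>
      simp only [List.getElem_cons_zero, List.getElem_cons_succ, List.getElem_replicate] <;> omega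
  · rintro (rfl | hx)
    · exact ⟨0, by omega, by simp only [List.getElem_cons_zero]; omega⟩
    · refine ⟨k - x + 1, by omega, ?_⟩
      simp only [List.getElem_cons_succ, List.getElem_replicate]
      omega

/-- The beta-set `X` with `j` beads added at the bottom; it describes the same partition. -/
def padBeta (j : ℕ) (X : Finset ℕ) : Finset ℕ :=
  range j ∪ X.map (addRightEmbedding j)

theorem mem_padBeta {j z : ℕ} {X : Finset ℕ} : z ∈ padBeta j X ↔ z < j ∨ j ≤ z ∧ z - j ∈ X := by
  simp only [padBeta, mem_union, mem_range, mem_map, addRightEmbedding_apply]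
  constructor
  · rintro (h | ⟨y, hy, rfl⟩)
    · exact Or.inl h
    · exact Or.inr ⟨by omega, by simpa using hy⟩
  · rintro (h | ⟨hz, hX⟩)
    · exact Or.inl h
    · exact Or.inr ⟨z - j, hX, by omega⟩

theorem add_mem_padBeta {j y : ℕ} {X : Finset ℕ} : y + j ∈ padBeta j X ↔ y ∈ X := by
  simp [mem_padBeta]

theorem card_padBeta (j : ℕ) (X : Finset ℕ) : (padBeta j X).card = j + X.card := by
  rw [padBeta, card_union_of_disjoint (disjoint_range_addRightEmbedding j X), card_range, card_map]

theorem padBeta_range (j m : ℕ) : padBeta j (range m) = range (j + m) := by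
  rw [range_add, padBeta, addLeftEmbedding_eq_addRightEmbedding]

theorem padBeta_injective (j : ℕ) : Function.Injective (padBeta j) := fun X Y h => by
  ext y
  rw [← add_mem_padBeta (j := j), h, add_mem_padBeta]

theorem padBeta_eq_range_card_iff {j : ℕ} {X : Finset ℕ} :
    padBeta j X = range (padBeta j X).card ↔ X = range X.card := by
  rw [card_padBeta, ← padBeta_range, (padBeta_injective j).eq_iff]

theorem filter_padBeta (j a : ℕ) (X : Finset ℕ) :
    (padBeta j X).filter (fun x => a ≤ x ∧ x - a ∉ padBeta j X) =
      (X.filter (fun x => a ≤ x ∧ x - a ∉ X)).map (addRightEmbedding j) := by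
  ext z
  simp only [mem_filter, mem_map, addRightEmbedding_apply, mem_padBeta]
  constructor
  · rintro ⟨hz | ⟨hjz, hX⟩, haz, hout⟩
    · omega
    · refine ⟨z - j, ⟨hX, by omega, fun h => hout (Or.inr ⟨by omega, ?_⟩)⟩, by omega⟩
      rwa [Nat.sub_right_comm]
  · rintro ⟨y, ⟨hy, hay, hout⟩, rfl⟩
    refine ⟨Or.inr ⟨by omega, by simpa using hy⟩, by omega, ?_⟩
    rintro (h | ⟨-, h⟩)
    · omega
    · exact hout (by rwa [Nat.sub_right_comm, Nat.add_sub_cancel] at h)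

theorem legLen_padBeta {j a y : ℕ} (X : Finset ℕ) (hay : a ≤ y) :
    legLen (padBeta j X) a (y + j) = legLen X a y := by
  rw [legLen, legLen, ← card_map (s := X.filter fun z => y - a < z ∧ z < y) (addRightEmbedding j)]
  congr 1
  ext z
  simp only [mem_filter, mem_map, addRightEmbedding_apply, mem_padBeta]
  constructor
  · rintro ⟨hz | ⟨hjz, hX⟩, hlo, hhi⟩
    · omega
    · exact ⟨z - j, ⟨hX, by omega, by omega⟩, by omega⟩
  · rintro ⟨w, ⟨hw, hlo, hhi⟩, rfl⟩
    exact ⟨Or.inr ⟨by omega, by simpa using hw⟩, by omega, by omega⟩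

theorem insert_erase_padBeta {j a y : ℕ} (X : Finset ℕ) (hay : a ≤ y) :
    insert (y + j - a) ((padBeta j X).erase (y + j)) = padBeta j (insert (y - a) (X.erase y)) := by
  ext z
  rcases lt_or_ge z j with hz | hz
  · simp only [mem_insert, mem_erase, mem_padBeta, hz, true_or, and_true, iff_true]
    omega
  · obtain ⟨w, rfl⟩ := Nat.exists_eq_add_of_le' hz
    rw [show y + j - a = y - a + j by omega]
    simp [add_mem_padBeta]

theorem legSums_padBeta (j : ℕ) (X : Finset ℕ) (l : List ℕ) :
    legSums (padBeta j X) l = legSums X l := by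
  induction l generalizing X with
  | nil => simp only [legSums, padBeta_eq_range_card_iff]
  | cons a r ih =>
    simp only [legSums, filter_padBeta, map_val, Multiset.bind_map]
    refine Multiset.bind_congr fun y hy => ?_
    have hay : a ≤ y := (mem_filter.mp hy).2.1
    rw [addRightEmbedding_apply, insert_erase_padBeta X hay, legLen_padBeta X hay, ih]

def signSum (X : Finset ℕ) (l : List ℕ) : ℤ :=
  ((legSums X l).map fun L => (-1 : ℤ) ^ L).sum

theorem charList_eq_signSum (lam mu : List ℕ) : charList lam mu = signSum (betaSet lam) mu := rfl

theorem signSum_nil (X : Finset ℕ) : signSum X [] = if X = range X.card then 1 else 0 := by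
  rw [signSum, legSums]
  split_ifs <;> simp

theorem signSum_cons (X : Finset ℕ) (a : ℕ) (r : List ℕ) :
    signSum X (a :: r) = ∑ x ∈ X.filter (fun x => a ≤ x ∧ x - a ∉ X),
      (-1 : ℤ) ^ legLen X a x * signSum (insert (x - a) (X.erase x)) r := by
  simp only [signSum, legSums, Multiset.map_bind, Multiset.sum_bind, Multiset.map_map,
    Function.comp_def, pow_add, Multiset.sum_map_mul_left]
  rfl

theorem signSum_padBeta (j : ℕ) (X : Finset ℕ) (l : List ℕ) :
    signSum (padBeta j X) l = signSum X l := by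
  rw [signSum, signSum, legSums_padBeta]

theorem charList_hookList_cycle {n k : ℕ} (hk : k < n) :
    charList (hookList n k) [n] = (-1) ^ k := by
  set X := insert n (Icc 1 k)
  have hfilter : X.filter (fun x => n ≤ x ∧ x - n ∉ X) = {n} := by
    ext x
    simp only [X, mem_filter, mem_insert, mem_Icc, mem_singleton]
    omega
  have hleg : legLen X n n = k := by
    have hlegs : X.filter (fun y => n - n < y ∧ y < n) = Icc 1 k := by
      ext y
      simp only [X, mem_filter, mem_insert, mem_Icc]
      omega
    rw [legLen, hlegs, Nat.card_Icc, Nat.add_sub_cancel]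
  have hmove : insert (n - n) (X.erase n) = range (k + 1) := by
    ext y
    simp only [X, mem_insert, mem_erase, mem_Icc, mem_range]
    omega
  rw [charList_eq_signSum, betaSet_hookList hk.le, signSum_cons, hfilter, sum_singleton, hleg,
    hmove, signSum_nil, card_range, if_pos rfl, mul_one]

theorem charList_hookList_cons {n k a : ℕ} (ha : 1 ≤ a) (han : a < n) (hk : k < n)
    (r : List ℕ) :
    charList (hookList n k) (a :: r) =
      (if a + k < n then charList (hookList (n - a) k) r else 0) +
        (if a ≤ k then (-1) ^ (a - 1) * charList (hookList (n - a) (k - a)) r else 0) := by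
  set X := insert n (Icc 1 k)
  have hnX : n ∉ Icc 1 k := by simp only [mem_Icc]; omega
  have hmove_top (h : a + k < n) :
      (-1) ^ legLen X a n * signSum (insert (n - a) (X.erase n)) r =
        charList (hookList (n - a) k) r := by
    have hleg : legLen X a n = 0 := by
      rw [legLen, card_eq_zero, filter_eq_empty_iff]
      intro y hy
      simp only [X, mem_insert, mem_Icc] at hy
      omega
    rw [hleg, pow_zero, one_mul, erase_insert hnX, charList_eq_signSum,
      betaSet_hookList (by omega)]
  have hmove_leg (h : a ≤ k) :
      (-1) ^ legLen X a a * signSum (insert (a - a) (X.erase a)) r =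
        (-1) ^ (a - 1) * charList (hookList (n - a) (k - a)) r := by
    have hleg : X.filter (fun y => a - a < y ∧ y < a) = Icc 1 (a - 1) := by
      ext y
      simp only [X, mem_filter, mem_insert, mem_Icc]
      omega
    have hpad : insert (a - a) (X.erase a) = padBeta a (betaSet (hookList (n - a) (k - a))) := by
      rw [betaSet_hookList (Nat.sub_le_sub_right hk.le a)]
      ext z
      rcases lt_or_ge z a with hz | hz
      · simp only [X, mem_padBeta, hz, true_or, iff_true, mem_insert, mem_erase, mem_Icc]
        omega
      · obtain ⟨w, rfl⟩ := Nat.exists_eq_add_of_le' hz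
        simp only [X, add_mem_padBeta, mem_insert, mem_erase, mem_Icc]
        omega
    rw [legLen, hleg, Nat.card_Icc, Nat.add_sub_cancel, hpad, signSum_padBeta,
      charList_eq_signSum]
  have hinner : ∀ x ∈ Icc 1 k, (a ≤ x ∧ x - a ∉ X ↔ a = x) := by
    intro x hx
    simp only [X, mem_Icc, mem_insert] at hx ⊢
    omega
  rw [charList_eq_signSum, betaSet_hookList hk.le, signSum_cons, sum_filter, sum_insert hnX,
    sum_congr rfl fun x hx => if_congr (hinner x hx) rfl rfl, sum_ite_eq]
  congr 1
  · by_cases h : a + k < n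
    · rw [if_pos ⟨han.le, by simp only [mem_insert, mem_Icc]; omega⟩, if_pos h, hmove_top h]
    · rw [if_neg (by simp only [mem_insert, mem_Icc]; omega), if_neg h]
  · by_cases h : a ≤ k
    · rw [if_pos (mem_Icc.mpr ⟨ha, h⟩), if_pos h, hmove_leg h]
    · rw [if_neg (by simp only [mem_Icc]; omega), if_neg h]

theorem sum_alternating_charList_hookList_cycle (n : ℕ) :
    ∑ k ∈ range n, (-1 : ℤ) ^ k * charList (hookList n k) [n] = n := by
  have hterm : ∀ k ∈ range n, (-1 : ℤ) ^ k * charList (hookList n k) [n] = 1 := fun k hk => by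
    rw [charList_hookList_cycle (mem_range.mp hk), ← mul_pow, neg_one_mul, neg_neg, one_pow]
  rw [sum_congr rfl hterm, sum_const, card_range, nsmul_one]

theorem sum_alternating_charList_hookList_cons {n a : ℕ} (ha : 1 ≤ a) (han : a < n)
    (r : List ℕ) : ∑ k ∈ range n, (-1 : ℤ) ^ k * charList (hookList n k) (a :: r) = 0 := by
  obtain ⟨m, rfl⟩ := Nat.exists_eq_add_of_le' han.le
  set c : ℕ → ℤ := fun k => (-1) ^ k * charList (hookList m k) r
  have hterm : ∀ k ∈ range (m + a), (-1 : ℤ) ^ k * charList (hookList (m + a) k) (a :: r) =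
      (if k < m then c k else 0) - (if a ≤ k then c (k - a) else 0) := fun k hk => by
    rw [charList_hookList_cons ha (by omega) (mem_range.mp hk), Nat.add_sub_cancel, mul_add,
      sub_eq_add_neg, add_comm a k]
    congr 1
    · simp only [c, add_lt_add_iff_right, mul_ite, mul_zero]
    · split_ifs with hak
      · have hsign : (-1 : ℤ) ^ k * (-1) ^ (a - 1) = -(-1) ^ (k - a) := by
          rw [← pow_add, show k + (a - 1) = k - a + 2 * (a - 1) + 1 by omega, pow_succ, pow_add,
            pow_mul, neg_one_sq, one_pow, mul_one, mul_neg_one]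
        rw [← mul_assoc, hsign, neg_mul]
      · rw [mul_zero, neg_zero]
  have htop : ∑ k ∈ range (m + a), (if k < m then c k else 0) = ∑ k ∈ range m, c k := by
    rw [sum_range_add, sum_congr rfl fun k hk => if_pos (mem_range.mp hk)]
    simp
  have hbottom : ∑ k ∈ range (m + a), (if a ≤ k then c (k - a) else 0) = ∑ k ∈ range m, c k := by
    rw [add_comm, sum_range_add, sum_eq_zero fun k hk => if_neg (by simpa using hk)]
    simp
  rw [sum_congr rfl hterm, sum_sub_distrib, htop, hbottom, sub_self]

theorem coe_sortedParts {n : ℕ} (μ : n.Partition) : (sortedParts μ : Multiset ℕ) = μ.parts := by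
  rw [sortedParts, Multiset.coe_reverse, Multiset.sort_eq]

theorem sortedParts_eq_singleton {m n : ℕ} {μ : m.Partition} (h : μ.parts = {n}) :
    sortedParts μ = [n] := by
  rw [sortedParts, h, Multiset.sort_singleton, List.reverse_singleton]

theorem exists_sortedParts_eq_cons {n : ℕ} {μ : n.Partition} (hn : 0 < n) (h : μ.parts ≠ {n}) :
    ∃ a r, sortedParts μ = a :: r ∧ 1 ≤ a ∧ a < n := by
  have hsum : (sortedParts μ).sum = n := by
    rw [← Multiset.sum_coe, coe_sortedParts, μ.parts_sum]
  have hpos : ∀ b ∈ sortedParts μ, 0 < b := fun b hb =>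
    μ.parts_pos (by rw [← coe_sortedParts]; exact Multiset.mem_coe.mpr hb)
  rcases hL : sortedParts μ with _ | ⟨a, _ | ⟨b, r⟩⟩
  · rw [hL, List.sum_nil] at hsum
    omega
  · rw [hL, List.sum_singleton] at hsum
    rw [← coe_sortedParts, hL, hsum] at h
    exact absurd rfl h
  · rw [hL] at hsum hpos
    have hb := hpos b (by simp)
    simp only [List.sum_cons] at hsum
    exact ⟨a, b :: r, rfl, hpos a (by simp), by omega⟩

theorem alternating_hook_sum_general (n : ℕ) (g : Equiv.Perm (Fin n)) :
    ((Equiv.Perm.partition g).parts ≠ ({n} : Multiset ℕ) →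
      ∑ k ∈ Finset.range n, (-1 : ℤ) ^ k *
        charList (hookList n k) ((Multiset.sort (Equiv.Perm.partition g).parts (· ≤ ·)).reverse)
        = 0) ∧
    ((Equiv.Perm.partition g).parts = ({n} : Multiset ℕ) →
      ∑ k ∈ Finset.range n, (-1 : ℤ) ^ k *
        charList (hookList n k) ((Multiset.sort (Equiv.Perm.partition g).parts (· ≤ ·)).reverse)
        = n) := by
  refine ⟨fun hg => ?_, fun hg => ?_⟩
  · rcases Nat.eq_zero_or_pos n with rfl | hn
    · exact sum_range_zero _
    obtain ⟨a, r, hμ, ha, han⟩ :=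
      exists_sortedParts_eq_cons (μ := g.partition) (by rwa [Fintype.card_fin]) (by simpa using hg)
    rw [Fintype.card_fin] at han
    change ∑ k ∈ range n, (-1 : ℤ) ^ k * charList (hookList n k) (sortedParts g.partition) = 0
    rw [hμ, sum_alternating_charList_hookList_cons ha han]
  · change ∑ k ∈ range n, (-1 : ℤ) ^ k * charList (hookList n k) (sortedParts g.partition) = n
    rw [sortedParts_eq_singleton hg, sum_alternating_charList_hookList_cycle]

/-- The generalized character `Θ = Σ_{k=0}^{n-1} (-1)^k χ^{(n-k,1^k)}` of `S_n`
vanishes on every element that is not an `n`-cycle, and takes the value `n`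
on every `n`-cycle. -/
theorem alternating_hook_sum (n : ℕ) (hn : 1 ≤ n) (g : Equiv.Perm (Fin n)) :
    ((Equiv.Perm.partition g).parts ≠ ({n} : Multiset ℕ) →
      ∑ k ∈ Finset.range n, (-1 : ℤ) ^ k *
        charList (hookList n k) ((Multiset.sort (Equiv.Perm.partition g).parts (· ≤ ·)).reverse)
        = 0) ∧
    ((Equiv.Perm.partition g).parts = ({n} : Multiset ℕ) →
      ∑ k ∈ Finset.range n, (-1 : ℤ) ^ k *
        charList (hookList n k) ((Multiset.sort (Equiv.Perm.partition g).parts (· ≤ ·)).reverse)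
        = n) :=
  alternating_hook_sum_general n g
end

section
/- Let m > n and let λ be a partition of m + n. Then λ has at most one hook of length m (i.e., at most one cell of λ has hook length m). -/
/-- The `i`-th part (0-indexed) of a partition, or `0` beyond the last part. -/
def partFn {n : ℕ} (lam : n.Partition) (i : ℕ) : ℕ := (sortedParts lam).getD i 0

/-- The `j`-th part (0-indexed) of the conjugate partition:
the number of parts of `lam` that exceed `j`. -/
def conjFn {n : ℕ} (lam : n.Partition) (j : ℕ) : ℕ :=
  ((Finset.range n).filter (fun i => j < partFn lam i)).card

/-- The hook length of the (0-indexed) cell `(i, j)` of `lam`: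
`lam_i - j + lam’_j - i - 1` in 0-indexed form. -/
def hookLength {n : ℕ} (lam : n.Partition) (i j : ℕ) : ℕ :=
  partFn lam i + conjFn lam j - i - j - 1

/-! Hook lengths strictly decrease along rows and down columns of the diagram, so two distinct
cells with hook length `m` must be `(i₁, j₁)` and `(i₂, j₂)` with `i₁ < i₂` and `j₂ < j₁`.
Their hooks share at most the cell `(i₂, j₁)`, and neither contains the cell `(i₁, j₂)`, so the
diagram has at least `2m > m + n` cells. -/

open Finset

theorem List.sum_range_getD {M : Type*} [AddCommMonoid M] {l : List M} {k : ℕ}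
    (hk : l.length ≤ k) : ∑ i ∈ Finset.range k, l.getD i 0 = l.sum := by
  rw [← Finset.sum_range_add_sum_Ico _ hk,
    Finset.sum_eq_zero fun i hi => getD_eq_default _ _ (Finset.mem_Ico.1 hi).1, add_zero,
    ← Fin.sum_univ_getElem, ← Fin.sum_univ_eq_sum_range]
  simp

namespace Nat.Partition

variable {N : ℕ} (lam : N.Partition)

lemma sortedParts_pairwise : (sortedParts lam).Pairwise (· ≥ ·) := by
  simpa only [sortedParts, List.pairwise_reverse] using Multiset.pairwise_sort lam.parts (· ≤ ·)

lemma sum_sortedParts : (sortedParts lam).sum = N := by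
  rw [sortedParts, List.sum_reverse, ← Multiset.sum_coe, Multiset.sort_eq, lam.parts_sum]

lemma length_sortedParts_le : (sortedParts lam).length ≤ N := by
  refine (List.length_le_sum_of_one_le _ fun x hx => ?_).trans (sum_sortedParts lam).le
  rw [sortedParts, List.mem_reverse, ← Multiset.mem_coe, Multiset.sort_eq] at hx
  exact lam.parts_pos hx

lemma partFn_antitone : Antitone (partFn lam) := by
  intro i j hij
  rcases lt_or_ge j (sortedParts lam).length with hj | hj
  · rw [partFn, partFn, List.getD_eq_getElem _ _ hj, List.getD_eq_getElem _ _ (hij.trans_lt hj)]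
    rcases hij.eq_or_lt with rfl | h
    · rfl
    · exact (sortedParts_pairwise lam).rel_get_of_lt h
  · rw [partFn, List.getD_eq_default _ _ hj]
    exact Nat.zero_le _

lemma partFn_eq_zero {i : ℕ} (hi : N ≤ i) : partFn lam i = 0 :=
  List.getD_eq_default _ _ ((length_sortedParts_le lam).trans hi)

lemma lt_of_lt_partFn {i j : ℕ} (h : j < partFn lam i) : i < N := by
  by_contra! hi
  simp [partFn_eq_zero lam hi] at h

lemma sum_range_partFn : ∑ i ∈ range N, partFn lam i = N := by
  conv_rhs => rw [← sum_sortedParts lam]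
  exact List.sum_range_getD (length_sortedParts_le lam)

lemma conjFn_antitone : Antitone (conjFn lam) :=
  fun _ _ h => card_le_card (monotone_filter_right _ fun _ _ => h.trans_lt)

lemma lt_conjFn_iff {i j : ℕ} : i < conjFn lam j ↔ j < partFn lam i := by
  constructor
  · intro hi
    by_contra! hij
    refine hi.not_ge ((card_le_card fun i' hi' => ?_).trans (card_range i).le)
    rw [mem_filter] at hi'
    rw [mem_range]
    by_contra! h
    exact (hij.trans_lt hi'.2).not_ge (partFn_antitone lam h)
  · intro hij
    have hiN := lt_of_lt_partFn lam hij
    rw [← Nat.add_one_le_iff, ← card_range (i + 1)]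
    refine card_le_card fun i' hi' => ?_
    rw [mem_range, Nat.lt_succ_iff] at hi'
    exact mem_filter.2 ⟨mem_range.2 (hi'.trans_lt hiN), hij.trans_le (partFn_antitone lam hi')⟩

def cells : Finset (ℕ × ℕ) := (range N).biUnion fun i => {i} ×ˢ range (partFn lam i)

lemma mem_cells {p : ℕ × ℕ} : p ∈ lam.cells ↔ p.2 < partFn lam p.1 := by
  obtain ⟨i, j⟩ := p
  simp only [cells, mem_biUnion, mem_product, mem_singleton, mem_range]
  constructor
  · rintro ⟨i, -, rfl, hj⟩
    exact hj
  · exact fun hj => ⟨i, lt_of_lt_partFn lam hj, rfl, hj⟩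

lemma card_cells_le : #lam.cells ≤ N :=
  card_biUnion_le.trans (by simp [sum_range_partFn])

def hook (i j : ℕ) : Finset (ℕ × ℕ) :=
  {i} ×ˢ Ico j (partFn lam i) ∪ Ioo i (conjFn lam j) ×ˢ {j}

lemma mem_hook {i j : ℕ} {p : ℕ × ℕ} : p ∈ lam.hook i j ↔
    p.1 = i ∧ j ≤ p.2 ∧ p.2 < partFn lam i ∨ (i < p.1 ∧ p.1 < conjFn lam j) ∧ p.2 = j := by
  simp only [hook, mem_union, mem_product, mem_singleton, mem_Ico, mem_Ioo]

lemma card_hook (i j : ℕ) : #(lam.hook i j) = hookLength lam i j := by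
  have hdisj : Disjoint ({i} ×ˢ Ico j (partFn lam i)) (Ioo i (conjFn lam j) ×ˢ {j}) := by
    simp only [disjoint_left, mem_product, mem_singleton, mem_Ioo]
    omega
  rw [hook, card_union_of_disjoint hdisj, card_product, card_product, card_singleton,
    card_singleton, Nat.card_Ico, Nat.card_Ioo, hookLength]
  have := lam.lt_conjFn_iff (i := i) (j := j)
  omega

lemma hook_subset_cells (i j : ℕ) : lam.hook i j ⊆ lam.cells := by
  rintro ⟨i', j'⟩ h
  rw [mem_hook] at h
  rw [mem_cells]
  rcases h with ⟨rfl, -, h⟩ | ⟨⟨-, h⟩, rfl⟩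
  · exact h
  · exact (lt_conjFn_iff lam).1 h

lemma hookLength_lt_hookLength {p q : ℕ × ℕ} (hpq : p < q) (hq : q.2 < partFn lam q.1) :
    hookLength lam q.1 q.2 < hookLength lam p.1 p.2 := by
  obtain ⟨hi, hj⟩ := Prod.le_def.1 hpq.le
  have hrow := partFn_antitone lam hi
  have hcol := conjFn_antitone lam hj
  have hp : p.2 < partFn lam p.1 := (hj.trans_lt hq).trans_le hrow
  have hp' := (lt_conjFn_iff lam).2 hp
  have hq' := (lt_conjFn_iff lam).2 hq
  unfold hookLength
  rcases Prod.lt_iff.1 hpq with h | h <;> omega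

lemma hookLength_add_hookLength_le {i₁ j₁ i₂ j₂ : ℕ} (hi : i₁ < i₂) (hj : j₂ < j₁)
    (h₁ : j₁ < partFn lam i₁) : hookLength lam i₁ j₁ + hookLength lam i₂ j₂ ≤ N := by
  set H₁ := lam.hook i₁ j₁
  set H₂ := lam.hook i₂ j₂
  have hinter : H₁ ∩ H₂ ⊆ {(i₂, j₁)} := by
    intro p hp
    rw [mem_inter, mem_hook, mem_hook] at hp
    rw [mem_singleton]
    ext <;> omega
  have hcorner : (i₁, j₂) ∉ H₁ ∪ H₂ := by
    rw [mem_union, mem_hook, mem_hook]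
    omega
  have hcell : (i₁, j₂) ∈ lam.cells := (mem_cells lam).2 (hj.trans h₁)
  calc hookLength lam i₁ j₁ + hookLength lam i₂ j₂
      = #(H₁ ∪ H₂) + #(H₁ ∩ H₂) := by rw [card_union_add_card_inter, card_hook, card_hook]
    _ ≤ #(H₁ ∪ H₂) + 1 := by grw [card_le_card hinter, card_singleton]
    _ = #(insert (i₁, j₂) (H₁ ∪ H₂)) := (card_insert_of_notMem hcorner).symm
    _ ≤ #lam.cells := card_le_card <|
      insert_subset hcell (union_subset (hook_subset_cells lam _ _) (hook_subset_cells lam _ _))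
    _ ≤ N := card_cells_le lam

lemma eq_of_hookLength_eq {p q : ℕ × ℕ} (hp : p.2 < partFn lam p.1) (hq : q.2 < partFn lam q.1)
    (hpq : hookLength lam p.1 p.2 = hookLength lam q.1 q.2)
    (hN : N < 2 * hookLength lam p.1 p.2) : p = q := by
  by_contra hne
  have hpq' : ¬p ≤ q := fun h =>
    (hookLength_lt_hookLength lam (h.lt_of_ne hne) hq).ne' hpq
  have hqp : ¬q ≤ p := fun h =>
    (hookLength_lt_hookLength lam (h.lt_of_ne (Ne.symm hne)) hp).ne hpq
  rw [Prod.le_def] at hpq' hqp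
  rcases (by omega : p.1 < q.1 ∧ q.2 < p.2 ∨ q.1 < p.1 ∧ p.2 < q.2) with ⟨hi, hj⟩ | ⟨hi, hj⟩
  · have := hookLength_add_hookLength_le lam hi hj hp
    omega
  · have := hookLength_add_hookLength_le lam hi hj hq
    omega

end Nat.Partition

/-- If `m > n` and `lam` is a partition of `m + n`, then at most one cell of
`lam` has hook length `m`. -/
theorem at_most_one_hook_of_large_length (m n : ℕ) (hmn : n < m)
    (lam : (m + n).Partition) :
    (((Finset.range (m + n)) ×ˢ (Finset.range (m + n))).filter
      (fun p => p.2 < partFn lam p.1 ∧ hookLength lam p.1 p.2 = m)).card ≤ 1 := by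
  rw [Finset.card_le_one]
  intro p hp q hq
  obtain ⟨hpcell, hphook⟩ := (mem_filter.1 hp).2
  obtain ⟨hqcell, hqhook⟩ := (mem_filter.1 hq).2
  exact lam.eq_of_hookLength_eq hpcell hqcell (hphook.trans hqhook.symm) (by omega)
end

section
/- Every sd-partition μ = (a_1,...,a_k) of n is a unique-path partition: for every partition λ of n there is at most one sequence λ = λ_0, λ_1, ..., λ_k = ∅ of partitions where λ_i is obtained from λ_{i-1} by removing a hook of length a_i. -/
/-- A list of parts is *strongly decreasing* if each entry (except possibly the
last) is strictly greater than the sum of all later entries. -/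
def StronglyDecreasing : List ℕ → Prop
  | [] => True
  | a :: r => (r = [] ∨ r.sum < a) ∧ StronglyDecreasing r

/-!
Removing an `a`-hook lowers the size of a partition by `a`, so a partition from which two
different `a₁`-hooks can be removed has size at least `2 a₁`. If `μ` is strongly decreasing and
`λ` admits a `μ`-path, then `|λ| = a₁ + (a₂ + ⋯ + a_k) < 2 a₁`; hence the first hook of a
`μ`-path is forced, and induction on the number of parts finishes the proof.
-/

/-- The size of the partition with beta-set `X`. -/
def betaSize (X : Finset ℕ) : ℤ :=
  ∑ x ∈ X, (x : ℤ) - ∑ i ∈ Finset.range X.card, (i : ℤ)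

lemma Finset.sum_range_card_le_sum (X : Finset ℕ) :
    ∑ i ∈ Finset.range X.card, i ≤ ∑ x ∈ X, x := by
  induction X using Finset.induction_on_max with
  | empty => simp
  | insert M X hlt ih =>
    have hM : M ∉ X := fun h => lt_irrefl M (hlt M h)
    have hcard : X.card ≤ M := by
      simpa using Finset.card_le_card fun y hy => Finset.mem_range.mpr (hlt y hy)
    rw [Finset.card_insert_of_notMem hM, Finset.sum_range_succ, Finset.sum_insert hM]
    omega

lemma betaSize_nonneg (X : Finset ℕ) : 0 ≤ betaSize X := by
  have h := (Nat.cast_le (α := ℤ)).mpr X.sum_range_card_le_sum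
  rw [Nat.cast_sum, Nat.cast_sum] at h
  rw [betaSize, sub_nonneg]
  exact h

section RemoveHook

variable {X : Finset ℕ} {a x y : ℕ}

lemma pos_of_sub_notMem (hx : x ∈ X) (hgap : x - a ∉ X) : 0 < a :=
  Nat.pos_of_ne_zero fun ha => hgap (by simpa [ha] using hx)

lemma card_insert_sub_erase (hx : x ∈ X) (hgap : x - a ∉ X) :
    (insert (x - a) (X.erase x)).card = X.card := by
  rw [Finset.card_insert_of_notMem fun h => hgap (Finset.mem_of_mem_erase h),
    Finset.card_erase_add_one hx]

lemma betaSize_insert_sub_erase (hx : x ∈ X) (hax : a ≤ x) (hgap : x - a ∉ X) :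
    betaSize (insert (x - a) (X.erase x)) = betaSize X - a := by
  have hsum : ∑ z ∈ X.erase x, (z : ℤ) + x = ∑ z ∈ X, (z : ℤ) := Finset.sum_erase_add _ _ hx
  rw [betaSize, betaSize, card_insert_sub_erase hx hgap,
    Finset.sum_insert fun h => hgap (Finset.mem_of_mem_erase h), Nat.cast_sub hax]
  linarith

lemma two_mul_le_betaSize (hx : x ∈ X) (hax : a ≤ x) (hxgap : x - a ∉ X)
    (hy : y ∈ X) (hay : a ≤ y) (hygap : y - a ∉ X) (hxy : x ≠ y) :
    2 * (a : ℤ) ≤ betaSize X := by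
  set X' := insert (x - a) (X.erase x)
  have hy' : y ∈ X' := Finset.mem_insert_of_mem (Finset.mem_erase.mpr ⟨hxy.symm, hy⟩)
  have hygap' : y - a ∉ X' := by
    intro h
    rcases Finset.mem_insert.mp h with h | h
    · exact hxy (by omega)
    · exact hygap (Finset.mem_of_mem_erase h)
  have := betaSize_nonneg (insert (y - a) (X'.erase y))
  rw [betaSize_insert_sub_erase hy' hay hygap', betaSize_insert_sub_erase hx hax hxgap] at this
  linarith

end RemoveHook

lemma numPaths_nil_le_one (X : Finset ℕ) : numPaths X [] ≤ 1 := by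
  unfold numPaths legSums
  split <;> simp

lemma numPaths_cons (X : Finset ℕ) (a : ℕ) (r : List ℕ) :
    numPaths X (a :: r) = ∑ x ∈ X.filter (fun x => a ≤ x ∧ x - a ∉ X),
      numPaths (insert (x - a) (X.erase x)) r := by
  rw [numPaths, legSums, Multiset.card_bind, ← Finset.sum_map_val]
  simp [numPaths, Function.comp_def]

lemma betaSize_eq_sum_of_numPaths_ne_zero {l : List ℕ} {X : Finset ℕ} (h : numPaths X l ≠ 0) :
    betaSize X = l.sum := by
  induction l generalizing X with
  | nil =>
    unfold numPaths legSums at h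
    split at h
    · next hX => rw [hX]; simp [betaSize]
    · simp at h
  | cons a r ih =>
    rw [numPaths_cons] at h
    obtain ⟨x, hxS, hx⟩ := Finset.exists_ne_zero_of_sum_ne_zero h
    obtain ⟨hxX, hax, hgap⟩ := Finset.mem_filter.mp hxS
    have := ih hx
    rw [betaSize_insert_sub_erase hxX hax hgap] at this
    rw [List.sum_cons, Nat.cast_add]
    linarith

theorem numPaths_le_one_of_stronglyDecreasing {l : List ℕ} (hl : StronglyDecreasing l)
    (X : Finset ℕ) : numPaths X l ≤ 1 := by
  induction l generalizing X with
  | nil => exact numPaths_nil_le_one X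
  | cons a r ih =>
    obtain ⟨hhead, hr⟩ := hl
    rw [numPaths_cons]
    by_cases hzero : ∀ x ∈ X.filter (fun x => a ≤ x ∧ x - a ∉ X),
        numPaths (insert (x - a) (X.erase x)) r = 0
    · rw [Finset.sum_eq_zero hzero]
      exact zero_le_one
    push Not at hzero
    obtain ⟨x, hxS, hx⟩ := hzero
    obtain ⟨hxX, hax, hxgap⟩ := Finset.mem_filter.mp hxS
    have hsize : betaSize X = a + r.sum := by
      have := betaSize_eq_sum_of_numPaths_ne_zero hx
      rw [betaSize_insert_sub_erase hxX hax hxgap] at this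
      linarith
    have hsmall : (r.sum : ℤ) < a := by
      rcases hhead with rfl | h
      · exact_mod_cast pos_of_sub_notMem hxX hxgap
      · exact_mod_cast h
    rw [Finset.sum_eq_single_of_mem x hxS]
    · exact ih hr _
    intro y hyS hyx
    obtain ⟨hyX, hay, hygap⟩ := Finset.mem_filter.mp hyS
    have := two_mul_le_betaSize hxX hax hxgap hyX hay hygap hyx.symm
    linarith

/-- Every sd-partition `μ` of `n` is a unique-path partition: for every
partition `lam` of `n` there is at most one way to successively remove hooks
of lengths `a₁, a₂, …` (the parts of `μ`) from `lam`, ending at the empty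
partition. -/
theorem sd_partition_is_unique_path (n : ℕ) (μ : n.Partition)
    (hsd : StronglyDecreasing (sortedParts μ)) (lam : n.Partition) :
    numPaths (betaSet (sortedParts lam)) (sortedParts μ) ≤ 1 :=
  numPaths_le_one_of_stronglyDecreasing hsd _
end

section
/- Let s(n) denote the number of sd-partitions of n (partitions (a_1,...,a_k) with a_i > a_{i+1}+...+a_k for all i < k), with s(0) = 1. Then s(n) = Σ_{i=0}^{⌊(n-1)/2⌋} s(i) for all n ≥ 1. -/
/-- `s n` is the number of strongly decreasing (sd-)partitions of `n`
(so `s 0 = 1`, counting the empty partition). -/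
noncomputable def s (n : ℕ) : ℕ :=
  Nat.card {μ : n.Partition // StronglyDecreasing (sortedParts μ)}

/-!
Removing the largest part `a₁` of an sd-partition of `n ≥ 1` leaves an sd-partition of
`i = n - a₁`, and the condition `a₁ > i` says exactly `2 i < n`, i.e. `i ≤ (n - 1) / 2`.
Conversely, prepending the part `n - i` to an sd-partition of such an `i` gives an
sd-partition of `n`. Hence the sd-partitions of `n` correspond to the disjoint union of the
sd-partitions of `0, …, ⌊(n - 1) / 2⌋`.
-/

theorem StronglyDecreasing.tail :
    ∀ {l : List ℕ}, StronglyDecreasing l → StronglyDecreasing l.tail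
  | [], h => h
  | _ :: _, h => h.2

theorem StronglyDecreasing.two_mul_sum_tail_lt :
    ∀ {l : List ℕ}, StronglyDecreasing l → 0 < l.sum → 2 * l.tail.sum < l.sum
  | [], _, hl => by simp at hl
  | a :: r, h, hl => by
    rcases h.1 with rfl | hr
    · simpa using hl
    · simp only [List.tail_cons, List.sum_cons]
      omega

namespace Nat.Partition

variable {n : ℕ}

theorem coe_sortedParts (μ : n.Partition) : (sortedParts μ : Multiset ℕ) = μ.parts := by
  rw [sortedParts, Multiset.coe_reverse, Multiset.sort_eq]

theorem sum_sortedParts_s11 (μ : n.Partition) : (sortedParts μ).sum = n := by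
  rw [← Multiset.sum_coe, coe_sortedParts, μ.parts_sum]

theorem pairwise_sortedParts (μ : n.Partition) : (sortedParts μ).Pairwise (· ≥ ·) :=
  List.pairwise_reverse.2 (Multiset.pairwise_sort μ.parts (· ≤ ·))

theorem sortedParts_eq_of_pairwise (μ : n.Partition) {l : List ℕ} (hl : l.Pairwise (· ≥ ·))
    (h : μ.parts = l) : sortedParts μ = l := by
  have hsort : Multiset.sort μ.parts (· ≤ ·) = l.reverse :=
    List.Perm.eq_of_pairwise' (Multiset.pairwise_sort _ _) (List.pairwise_reverse.2 hl) <|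
      Multiset.coe_eq_coe.1 (by rw [Multiset.sort_eq, h, Multiset.coe_reverse])
  rw [sortedParts, hsort, List.reverse_reverse]

def eraseLargestPart (μ : n.Partition) : ((sortedParts μ).tail.sum).Partition where
  parts := (sortedParts μ).tail
  parts_pos hi := μ.parts_pos <| by
    rw [← coe_sortedParts, Multiset.mem_coe]
    exact List.mem_of_mem_tail hi
  parts_sum := Multiset.sum_coe _

theorem sortedParts_eraseLargestPart (μ : n.Partition) :
    sortedParts μ.eraseLargestPart = (sortedParts μ).tail :=
  sortedParts_eq_of_pairwise _ (pairwise_sortedParts μ).tail rfl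

def consPart {i : ℕ} (ν : i.Partition) (h : i < n) : n.Partition where
  parts := (n - i) ::ₘ ν.parts
  parts_pos hj := by
    rcases Multiset.mem_cons.1 hj with rfl | hj
    · omega
    · exact ν.parts_pos hj
  parts_sum := by
    rw [Multiset.sum_cons, ν.parts_sum]
    omega

theorem sortedParts_consPart {i : ℕ} (ν : i.Partition) (h : i < n) (hle : i ≤ n - i) :
    sortedParts (ν.consPart h) = (n - i) :: sortedParts ν := by
  refine sortedParts_eq_of_pairwise _ ?_ ?_
  · refine List.pairwise_cons.2 ⟨fun b hb => ?_, pairwise_sortedParts ν⟩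
    rw [← Multiset.mem_coe, coe_sortedParts] at hb
    exact (le_of_mem_parts hb).trans hle
  · rw [← Multiset.cons_coe, coe_sortedParts]
    rfl

theorem consPart_eraseLargestPart (μ : n.Partition) (h : (sortedParts μ).tail.sum < n) :
    μ.eraseLargestPart.consPart h = μ := by
  have hsum := sum_sortedParts_s11 μ
  ext1
  rw [← coe_sortedParts μ]
  change (n - (sortedParts μ).tail.sum) ::ₘ ((sortedParts μ).tail : Multiset ℕ) = _
  cases hl : sortedParts μ with
  | nil => simp [hl] at hsum h; omega
  | cons a r =>
    rw [hl, List.sum_cons] at hsum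
    rw [List.tail_cons, Multiset.cons_coe, show n - r.sum = a by omega]

theorem parts_eraseLargestPart_consPart {i : ℕ} (ν : i.Partition) (h : i < n)
    (hle : i ≤ n - i) : (ν.consPart h).eraseLargestPart.parts = ν.parts := by
  change ((sortedParts (ν.consPart h)).tail : Multiset ℕ) = _
  rw [sortedParts_consPart ν h hle, List.tail_cons, coe_sortedParts]

end Nat.Partition

open Nat.Partition

abbrev SDPartition (n : ℕ) : Type :=
  {μ : n.Partition // StronglyDecreasing (sortedParts μ)}

theorem SDPartition.sigma_ext {m : ℕ} {x y : Σ i : Fin m, SDPartition i}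
    (h : x.2.1.parts = y.2.1.parts) : x = y := by
  obtain ⟨i, ν, hν⟩ := x
  obtain ⟨j, ν', hν'⟩ := y
  obtain rfl : i = j := Fin.ext (by rw [← ν.parts_sum, ← ν'.parts_sum, h])
  obtain rfl : ν = ν' := Nat.Partition.ext h
  rfl

theorem SDPartition.two_mul_sum_tail_lt {n : ℕ} (hn : 0 < n) (μ : SDPartition n) :
    2 * (sortedParts μ.1).tail.sum < n := by
  simpa only [sum_sortedParts_s11] using μ.2.two_mul_sum_tail_lt (by rwa [sum_sortedParts_s11])

def SDPartition.equivSigma {n : ℕ} (hn : 1 ≤ n) :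
    SDPartition n ≃ Σ i : Fin ((n - 1) / 2 + 1), SDPartition i where
  toFun μ :=
    have := μ.two_mul_sum_tail_lt hn
    ⟨⟨(sortedParts μ.1).tail.sum, by omega⟩,
      ⟨μ.1.eraseLargestPart, by rw [sortedParts_eraseLargestPart]; exact μ.2.tail⟩⟩
  invFun x :=
    have := x.1.2
    ⟨x.2.1.consPart (n := n) (by omega), by
      rw [sortedParts_consPart _ _ (by omega)]
      exact ⟨Or.inr (by rw [sum_sortedParts_s11]; omega), x.2.2⟩⟩
  left_inv μ :=
    have := μ.two_mul_sum_tail_lt hn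
    Subtype.ext (consPart_eraseLargestPart _ (by omega))
  right_inv x :=
    have := x.1.2
    SDPartition.sigma_ext (parts_eraseLargestPart_consPart _ (by omega) (by omega))

/-- The number `s n` of sd-partitions of `n` satisfies
`s(n) = Σ_{i=0}^{⌊(n-1)/2⌋} s(i)` for all `n ≥ 1`. -/
theorem sd_count_recurrence (n : ℕ) (hn : 1 ≤ n) :
    s n = ∑ i ∈ Finset.range ((n - 1) / 2 + 1), s i := by
  rw [s, Nat.card_congr (SDPartition.equivSigma hn), Nat.card_sigma,
    ← Fin.sum_univ_eq_sum_range]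
  rfl
end

section
/- Write n = 2^{r_1} + ... + 2^{r_t} in binary with r_1 > ... > r_t ≥ 0 and let μ = (2^{r_1},...,2^{r_t}). Then the set of partitions λ of n with χ^λ(μ) ≠ 0 is exactly the set of partitions λ for which the irreducible character χ^λ of S_n has odd degree, and this set has cardinality 2^{r_1 + r_2 + ... + r_t}. -/
namespace BetaSet

open Finset

/-- The size of the partition with beta-set `X`. -/
def weight (X : Finset ℕ) : ℕ := ∑ x ∈ X, x - X.card.choose 2

theorem choose_two_add_one (n : ℕ) : (n + 1).choose 2 = n.choose 2 + n := by
  rw [Nat.choose_succ_succ', Nat.choose_one_right, add_comm]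

theorem choose_card_two_le_sum (X : Finset ℕ) : X.card.choose 2 ≤ ∑ x ∈ X, x := by
  induction X using Finset.induction_on_max with
  | empty => simp
  | insert m s hlt ih =>
    have hm : m ∉ s := fun h => (hlt m h).false
    have hcard : s.card ≤ m := by simpa using card_le_card fun x hx => mem_range.2 (hlt x hx)
    rw [sum_insert hm, card_insert_of_notMem hm, choose_two_add_one]
    omega

theorem eq_range_of_sum_eq_choose {X : Finset ℕ} (h : ∑ x ∈ X, x = X.card.choose 2) :
    X = range X.card := by
  induction X using Finset.induction_on_max with
  | empty => simp
  | insert m s hlt ih =>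
    have hm : m ∉ s := fun h => (hlt m h).false
    have hcard : s.card ≤ m := by simpa using card_le_card fun x hx => mem_range.2 (hlt x hx)
    have hs := choose_card_two_le_sum s
    rw [sum_insert hm, card_insert_of_notMem hm, choose_two_add_one] at h
    rw [card_insert_of_notMem hm, range_add_one, ih (by omega), card_range,
      show m = s.card by omega]

theorem weight_add_choose (X : Finset ℕ) : weight X + X.card.choose 2 = ∑ x ∈ X, x :=
  Nat.sub_add_cancel (choose_card_two_le_sum X)

theorem weight_eq_zero_iff {X : Finset ℕ} : weight X = 0 ↔ X = range X.card := by
  refine ⟨fun h => eq_range_of_sum_eq_choose ?_, fun h => ?_⟩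
  · simpa [h] using (weight_add_choose X).symm
  · rw [h]
    simp [weight, sum_range_id, Nat.choose_two_right]

theorem lt_weight_add_card {X : Finset ℕ} {x : ℕ} (hx : x ∈ X) : x < weight X + X.card := by
  have hsum := add_sum_erase X (fun y => y) hx
  have hrest := choose_card_two_le_sum (X.erase x)
  have hw := weight_add_choose X
  obtain ⟨k, hk⟩ : ∃ k, X.card = k + 1 := Nat.exists_eq_succ_of_ne_zero (card_ne_zero_of_mem hx)
  rw [card_erase_of_mem hx, hk, Nat.add_sub_cancel] at hrest
  rw [hk, choose_two_add_one] at hw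
  omega

variable {a w x y : ℕ} {X Z : Finset ℕ} {L : List ℕ} {n : ℕ}

def removeHook (a : ℕ) (X : Finset ℕ) (x : ℕ) : Finset ℕ := insert (x - a) (X.erase x)

def removableHooks (a : ℕ) (X : Finset ℕ) : Finset ℕ := X.filter (fun x => a ≤ x ∧ x - a ∉ X)

theorem mem_removableHooks : x ∈ removableHooks a X ↔ x ∈ X ∧ a ≤ x ∧ x - a ∉ X := by
  simp [removableHooks]

theorem mem_removeHook : y ∈ removeHook a X x ↔ y = x - a ∨ y ≠ x ∧ y ∈ X := by
  simp [removeHook]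

theorem card_removeHook (hx : x ∈ removableHooks a X) : (removeHook a X x).card = X.card := by
  obtain ⟨hxX, -, hxa⟩ := mem_removableHooks.1 hx
  rw [removeHook, card_insert_of_notMem (fun h => hxa (mem_of_mem_erase h)),
    card_erase_add_one hxX]

theorem weight_removeHook (hx : x ∈ removableHooks a X) :
    weight (removeHook a X x) + a = weight X := by
  obtain ⟨hxX, hax, hxa⟩ := mem_removableHooks.1 hx
  have hsum : ∑ y ∈ removeHook a X x, y + x = ∑ y ∈ X, y + (x - a) := by
    rw [removeHook, sum_insert (fun h => hxa (mem_of_mem_erase h)), add_assoc,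
      sum_erase_add _ _ hxX, add_comm]
  have h1 := weight_add_choose (removeHook a X x)
  have h2 := weight_add_choose X
  rw [card_removeHook hx] at h1
  omega

theorem numPaths_nil (X : Finset ℕ) :
    numPaths X [] = if X = range X.card then 1 else 0 := by
  unfold numPaths legSums
  split <;> simp

theorem numPaths_cons (X : Finset ℕ) (a : ℕ) (r : List ℕ) :
    numPaths X (a :: r) = ∑ x ∈ removableHooks a X, numPaths (removeHook a X x) r := by
  simp [numPaths, legSums, removableHooks, removeHook, Multiset.card_bind, Finset.sum]

theorem removableHooks_eq_empty (h : weight X < a) : removableHooks a X = ∅ :=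
  eq_empty_of_forall_notMem fun _ hx => by have := weight_removeHook hx; omega

/-- Two distinct `a`-hooks can be removed one after the other, so the partition has size `≥ 2a`. -/
theorem card_removableHooks_le_one (h : weight X < 2 * a) :
    (removableHooks a X).card ≤ 1 := by
  refine card_le_one.2 fun x hx y hy => by_contra fun hne => ?_
  obtain ⟨hxX, hax, hxa⟩ := mem_removableHooks.1 hx
  obtain ⟨hyX, hay, hya⟩ := mem_removableHooks.1 hy
  have hy' : y ∈ removableHooks a (removeHook a X x) := by
    simp only [mem_removableHooks, mem_removeHook]
    refine ⟨.inr ⟨Ne.symm hne, hyX⟩, hay, ?_⟩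
    rintro (h | ⟨-, h⟩)
    · omega
    · exact hya h
  have := weight_removeHook hx
  have := weight_removeHook hy'
  omega

theorem numPaths_cons_of_mem (h : weight X < 2 * a) (hx : x ∈ removableHooks a X)
    (r : List ℕ) : numPaths X (a :: r) = numPaths (removeHook a X x) r := by
  rw [numPaths_cons, sum_eq_single_of_mem x hx fun y hy hne =>
    absurd (card_le_one.1 (card_removableHooks_le_one h) y hy x hx) hne]

def Superincreasing : List ℕ → Prop
  | [] => True
  | a :: r => r.sum < a ∧ Superincreasing r

theorem numPaths_le_one : ∀ {l : List ℕ}, Superincreasing l → ∀ {X : Finset ℕ},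
    weight X = l.sum → numPaths X l ≤ 1
  | [], _, X, _ => by rw [numPaths_nil]; split <;> omega
  | a :: r, ⟨hra, hr⟩, X, hX => by
    rw [List.sum_cons] at hX
    rcases (removableHooks a X).eq_empty_or_nonempty with he | ⟨x, hx⟩
    · simp [numPaths_cons, he]
    · rw [numPaths_cons_of_mem (by omega) hx]
      exact numPaths_le_one hr (by have := weight_removeHook hx; omega)

theorem superincreasing_map_two_pow {l : List ℕ} (hl : l.Pairwise (· > ·)) :
    Superincreasing (l.map (2 ^ ·)) := by
  induction l with
  | nil => trivial
  | cons b l ih =>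
    rw [List.pairwise_cons] at hl
    refine ⟨?_, ih hl.2⟩
    rw [← List.sum_toFinset _ (hl.2.imp fun h => h.ne')]
    exact Nat.geomSum_lt le_rfl fun k hk => hl.1 k (List.mem_toFinset.1 hk)

theorem prod_map_two_pow (l : List ℕ) : (l.map (2 ^ ·)).prod = 2 ^ l.sum := by
  induction l <;> simp [pow_add, *]

theorem charList_ne_zero_iff {lam mu : List ℕ} (h : numPaths (betaSet lam) mu ≤ 1) :
    charList lam mu ≠ 0 ↔ numPaths (betaSet lam) mu ≠ 0 := by
  rw [numPaths] at h ⊢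
  rw [charList]
  rcases Nat.le_one_iff_eq_zero_or_eq_one.1 h with h0 | h1
  · simp [Multiset.card_eq_zero.1 h0]
  · obtain ⟨L, hL⟩ := Multiset.card_eq_one.1 h1
    simp [hL]

theorem mem_removableHooks_removeHook (ha : 0 < a) (hx : x ∈ removableHooks a X) :
    y ∈ removableHooks a (removeHook a X x) ↔
      y = x - a ∧ x ∈ removableHooks (2 * a) X ∨ y = x + a ∧ x + a ∈ X ∨
        y ∈ removableHooks a X ∧ y ≠ x := by
  simp only [mem_removableHooks, mem_removeHook] at hx ⊢
  rcases eq_or_ne y (x - a) with rfl | h1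
  · rw [show x - a - a = x - 2 * a by omega]
    grind
  · grind

theorem removeHook_removeHook_sub (hx : x ∈ removableHooks a X) :
    removeHook a (removeHook a X x) (x - a) = removeHook (2 * a) X x := by
  simp only [mem_removableHooks] at hx
  ext t
  simp only [mem_removeHook, show x - a - a = x - 2 * a by omega]
  grind

theorem removeHook_removeHook_add (ha : 0 < a) (hx : x ∈ removableHooks a X) :
    removeHook a (removeHook a X x) (x + a) = removeHook (2 * a) X (x + a) := by
  simp only [mem_removableHooks] at hx
  ext t
  simp only [mem_removeHook, show x + a - 2 * a = x - a by omega, Nat.add_sub_cancel]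
  grind

theorem removeHook_comm (hx : x ∈ removableHooks a X) (hy : y ∈ removableHooks a X) :
    removeHook a (removeHook a X x) y = removeHook a (removeHook a X y) x := by
  simp only [mem_removableHooks] at hx hy
  ext t
  simp only [mem_removeHook]
  grind

def hookPairs (a : ℕ) (X : Finset ℕ) : Finset (Σ _ : ℕ, ℕ) :=
  (removableHooks a X).sigma fun x => removableHooks a (removeHook a X x)

/-- A pair is adjacent when its two hooks together form a `2a`-hook. -/
def IsAdjacent (a : ℕ) (p : Σ _ : ℕ, ℕ) : Prop := p.2 = p.1 - a ∨ p.2 = p.1 + a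

instance (a : ℕ) : DecidablePred (IsAdjacent a) := fun _ => instDecidableOr

theorem mem_hookPairs {p : Σ _ : ℕ, ℕ} (ha : 0 < a) : p ∈ hookPairs a X ↔
    p.1 ∈ removableHooks a X ∧ (p.2 = p.1 - a ∧ p.1 ∈ removableHooks (2 * a) X ∨
      p.2 = p.1 + a ∧ p.1 + a ∈ X ∨ p.2 ∈ removableHooks a X ∧ p.2 ≠ p.1) := by
  rw [hookPairs, mem_sigma]
  exact and_congr_right fun hx => mem_removableHooks_removeHook ha hx

theorem numPaths_cons_cons (X : Finset ℕ) (a : ℕ) (r : List ℕ) :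
    numPaths X (a :: a :: r) =
      ∑ p ∈ hookPairs a X, numPaths (removeHook a (removeHook a X p.1) p.2) r := by
  simp only [numPaths_cons, hookPairs, sum_sigma]

theorem sum_hookPairs_adjacent (ha : 0 < a) (X : Finset ℕ) (r : List ℕ) :
    ∑ p ∈ hookPairs a X with IsAdjacent a p, numPaths (removeHook a (removeHook a X p.1) p.2) r =
      numPaths X (2 * a :: r) := by
  rw [numPaths_cons]
  refine sum_nbij' (fun p => if p.2 = p.1 - a then p.1 else p.2)
    (fun z => if z - a ∈ X then ⟨z - a, z⟩ else ⟨z, z - a⟩) (fun p hp => ?_) (fun z hz => ?_)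
    (fun p hp => ?_) (fun z hz => ?_) (fun p hp => ?_)
  · rw [mem_filter] at hp
    simp only [mem_hookPairs ha, IsAdjacent, mem_removableHooks] at hp ⊢
    grind
  · rw [mem_filter]
    simp only [mem_hookPairs ha, IsAdjacent, mem_removableHooks] at hz ⊢
    grind
  · rw [mem_filter] at hp
    simp only [mem_hookPairs ha, IsAdjacent, mem_removableHooks] at hp
    grind
  · grind
  · obtain ⟨⟨hx, -⟩, h | h⟩ := (mem_filter.1 hp).imp_left (mem_hookPairs ha).1
    · simp only [h, removeHook_removeHook_sub hx, if_true]
    · simp only [h, removeHook_removeHook_add ha hx, if_neg (show p.1 + a ≠ p.1 - a by omega)]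

/-- Non-adjacent hooks can be removed in either order, so their pairs cancel modulo `2`. -/
theorem sum_hookPairs_not_adjacent (ha : 0 < a) (X : Finset ℕ) (r : List ℕ) :
    ∑ p ∈ hookPairs a X with ¬IsAdjacent a p,
      (numPaths (removeHook a (removeHook a X p.1) p.2) r : ZMod 2) = 0 := by
  have hN : ∀ p ∈ (hookPairs a X).filter fun p => ¬IsAdjacent a p,
      p.1 ∈ removableHooks a X ∧ p.2 ∈ removableHooks a X ∧ p.2 ≠ p.1 := fun p hp => by
    rw [mem_filter] at hp
    simp only [mem_hookPairs ha, IsAdjacent] at hp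
    grind
  refine sum_involution (fun p _ => ⟨p.2, p.1⟩) (fun p hp => ?_) (fun p hp _ => ?_)
    (fun p hp => ?_) (fun p _ => rfl)
  · obtain ⟨hx, hy, -⟩ := hN p hp
    rw [removeHook_comm hx hy, CharTwo.add_self_eq_zero]
  · simp [Sigma.ext_iff, (hN p hp).2.2]
  · obtain ⟨hx, hy, hne⟩ := hN p hp
    rw [mem_filter]
    simp only [mem_hookPairs ha, IsAdjacent, mem_removableHooks] at hx hy ⊢
    grind

theorem natCast_numPaths_cons_cons (ha : 0 < a) (X : Finset ℕ) (r : List ℕ) :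
    (numPaths X (a :: a :: r) : ZMod 2) = numPaths X (2 * a :: r) := by
  rw [numPaths_cons_cons, ← sum_filter_add_sum_filter_not _ (IsAdjacent a),
    sum_hookPairs_adjacent ha, Nat.cast_add, Nat.cast_sum, sum_hookPairs_not_adjacent ha, add_zero]

theorem natCast_numPaths_cons_congr {s t : List ℕ}
    (h : ∀ Y, (numPaths Y s : ZMod 2) = numPaths Y t) (a : ℕ) (X : Finset ℕ) :
    (numPaths X (a :: s) : ZMod 2) = numPaths X (a :: t) := by
  simp only [numPaths_cons, Nat.cast_sum, h]

theorem natCast_numPaths_replicate_two_pow_append (k : ℕ) (r : List ℕ) (X : Finset ℕ) :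
    (numPaths X (List.replicate (2 ^ k) 1 ++ r) : ZMod 2) = numPaths X (2 ^ k :: r) := by
  induction k generalizing r X with
  | zero => rfl
  | succ k ih =>
    rw [pow_succ, mul_two, List.replicate_add, List.append_assoc, ih,
      natCast_numPaths_cons_congr (ih r), natCast_numPaths_cons_cons (by positivity), two_mul]

theorem natCast_numPaths_replicate_sum_two_pow (l : List ℕ) (X : Finset ℕ) :
    (numPaths X (List.replicate (l.map (2 ^ ·)).sum 1) : ZMod 2) = numPaths X (l.map (2 ^ ·)) := by
  induction l generalizing X with
  | nil => rfl
  | cons k l ih =>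
    rw [List.map_cons, List.sum_cons, List.replicate_add,
      natCast_numPaths_replicate_two_pow_append, natCast_numPaths_cons_congr ih]

theorem odd_numPaths_replicate_sum_two_pow_iff (l : List ℕ) (X : Finset ℕ) :
    Odd (numPaths X (List.replicate (l.map (2 ^ ·)).sum 1)) ↔
      Odd (numPaths X (l.map (2 ^ ·))) := by
  rw [← ZMod.natCast_eq_one_iff_odd, ← ZMod.natCast_eq_one_iff_odd,
    natCast_numPaths_replicate_sum_two_pow]

/-- Adding a zero part: the beta-set of `(λ₁, …, λ_ℓ, 0)`. -/
def shift (X : Finset ℕ) : Finset ℕ := insert 0 (X.map (addRightEmbedding 1))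

@[simp] theorem zero_mem_shift : 0 ∈ shift X := mem_insert_self _ _

@[simp] theorem add_one_mem_shift : x + 1 ∈ shift X ↔ x ∈ X := by
  simp [shift]

theorem shift_injective : Function.Injective shift := fun X Y h => by
  ext x; rw [← add_one_mem_shift, h, add_one_mem_shift]

theorem card_shift (X : Finset ℕ) : (shift X).card = X.card + 1 := by
  rw [shift, card_insert_of_notMem (by simp), card_map]

theorem sum_shift (X : Finset ℕ) : ∑ x ∈ shift X, x = ∑ x ∈ X, x + X.card := by
  simp [shift, sum_add_distrib]

theorem weight_shift (X : Finset ℕ) : weight (shift X) = weight X := by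
  have h1 := weight_add_choose (shift X)
  have h2 := weight_add_choose X
  rw [card_shift, choose_two_add_one, sum_shift] at h1
  omega

theorem removableHooks_shift (a : ℕ) (X : Finset ℕ) :
    removableHooks a (shift X) = (removableHooks a X).map (addRightEmbedding 1) := by
  ext z
  rcases z with _ | z
  · simp [mem_removableHooks]
  · simp only [mem_removableHooks, mem_map, addRightEmbedding_apply, add_one_mem_shift,
      add_left_inj, exists_eq_right]
    rcases lt_or_ge z a with h | h
    · simp only [show ¬a ≤ z by omega, false_and, and_false, iff_false]
      rintro ⟨-, -, h0⟩
      exact h0 (by rw [show z + 1 - a = 0 by omega]; exact zero_mem_shift)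
    · rw [show z + 1 - a = z - a + 1 by omega, add_one_mem_shift]
      simp [h, show a ≤ z + 1 by omega]

theorem removeHook_shift (hax : a ≤ x) :
    removeHook a (shift X) (x + 1) = shift (removeHook a X x) := by
  ext z
  rcases z with _ | z
  · simp [mem_removeHook]
  · simp only [mem_removeHook, add_one_mem_shift]
    grind

theorem numPaths_shift (X : Finset ℕ) (l : List ℕ) :
    numPaths (shift X) l = numPaths X l := by
  induction l generalizing X with
  | nil => simp only [numPaths_nil, ← weight_eq_zero_iff, weight_shift]
  | cons a r ih =>
    rw [numPaths_cons, numPaths_cons, removableHooks_shift, sum_map]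
    refine sum_congr rfl fun x hx => ?_
    rw [addRightEmbedding_apply, removeHook_shift (mem_removableHooks.1 hx).2.1, ih]

theorem mem_shift_iterate {j : ℕ} : x ∈ shift^[j] X ↔ x < j ∨ j ≤ x ∧ x - j ∈ X := by
  induction j generalizing x with
  | zero => simp
  | succ j ih =>
    rw [Function.iterate_succ_apply']
    rcases x with _ | x
    · simp
    · rw [add_one_mem_shift, ih, show x + 1 - (j + 1) = x - j by omega]
      grind

theorem card_shift_iterate (j : ℕ) (X : Finset ℕ) : (shift^[j] X).card = X.card + j := by
  induction j with
  | zero => rfl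
  | succ j ih => rw [Function.iterate_succ_apply', card_shift, ih, add_assoc]

theorem weight_shift_iterate (j : ℕ) (X : Finset ℕ) : weight (shift^[j] X) = weight X := by
  induction j with
  | zero => rfl
  | succ j ih => rw [Function.iterate_succ_apply', weight_shift, ih]

theorem numPaths_shift_iterate (j : ℕ) (X : Finset ℕ) (l : List ℕ) :
    numPaths (shift^[j] X) l = numPaths X l := by
  induction j with
  | zero => rfl
  | succ j ih => rw [Function.iterate_succ_apply', numPaths_shift, ih]

theorem exists_eq_shift_iterate (Y : Finset ℕ) : ∃ j X, 0 ∉ X ∧ Y = shift^[j] X := by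
  induction h : Y.card generalizing Y with
  | zero => exact ⟨0, ∅, by simp, by simpa using h⟩
  | succ k ih =>
    by_cases h0 : 0 ∈ Y
    · have hY : Y = shift ((Y.erase 0).image (· - 1)) := by
        ext x
        rcases x with _ | x
        · simp [h0]
        · simp only [add_one_mem_shift, mem_image, mem_erase]
          exact ⟨fun hx => ⟨x + 1, ⟨by omega, hx⟩, rfl⟩,
            by rintro ⟨y, ⟨hy, hyY⟩, rfl⟩; rwa [Nat.sub_add_cancel (by omega)]⟩
      obtain ⟨j, X, hX, hj⟩ := ih ((Y.erase 0).image (· - 1)) (by rw [hY, card_shift] at h; omega)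
      exact ⟨j + 1, X, hX, by rw [Function.iterate_succ_apply', ← hj, ← hY]⟩
    · exact ⟨0, Y, h0, rfl⟩

theorem shift_iterate_inj {j k : ℕ} {X Y : Finset ℕ} (hX : 0 ∉ X) (hY : 0 ∉ Y)
    (h : shift^[j] X = shift^[k] Y) : j = k ∧ X = Y := by
  have hjk : j = k := by
    have hj := fun i => (mem_shift_iterate (x := i) (j := j) (X := X))
    have hk := fun i => (mem_shift_iterate (x := i) (j := k) (X := Y))
    rw [h] at hj
    rcases lt_trichotomy j k with hlt | heq | hgt
    · have := (hj j).symm.trans (hk j)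
      simp [hlt, hX] at this
    · exact heq
    · have := (hj k).symm.trans (hk k)
      simp [hgt, hY] at this
  subst hjk
  exact ⟨rfl, (shift_injective.iterate j) h⟩

theorem card_le_weight (h0 : 0 ∉ X) : X.card ≤ weight X := by
  have h1 := choose_card_two_le_sum (insert 0 X)
  have h2 := weight_add_choose X
  rw [sum_insert h0, card_insert_of_notMem h0, choose_two_add_one, zero_add] at h1
  omega

theorem range_subset_of_weight_add_le_card (h : weight X + a ≤ X.card) : range a ⊆ X := by
  obtain ⟨j, Y, hY, rfl⟩ := exists_eq_shift_iterate X
  rw [weight_shift_iterate, card_shift_iterate] at h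
  have := card_le_weight hY
  intro x hx
  exact mem_shift_iterate.2 (.inl (by rw [mem_range] at hx; omega))

def betaSets (N w : ℕ) : Finset (Finset ℕ) :=
  ((range (N + w)).powersetCard N).filter (weight · = w)

theorem mem_betaSets {N w : ℕ} : X ∈ betaSets N w ↔ X.card = N ∧ weight X = w := by
  simp only [betaSets, mem_filter, mem_powersetCard, and_assoc]
  refine ⟨fun h => h.2, fun h => ⟨fun x hx => ?_, h⟩⟩
  have := lt_weight_add_card hx
  rw [mem_range]
  omega

def addHook (a : ℕ) (Z : Finset ℕ) (w : ℕ) : Finset ℕ := insert (w + a) (Z.erase w)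

def addableHooks (a : ℕ) (Z : Finset ℕ) : Finset ℕ := Z.filter (fun w => w + a ∉ Z)

theorem mem_addableHooks : w ∈ addableHooks a Z ↔ w ∈ Z ∧ w + a ∉ Z := mem_filter

theorem add_mem_removableHooks_addHook (hw : w ∈ addableHooks a Z) :
    w + a ∈ removableHooks a (addHook a Z w) := by
  rw [mem_addableHooks] at hw
  simp only [mem_removableHooks, addHook, mem_insert, mem_erase, Nat.add_sub_cancel]
  grind

theorem removeHook_addHook (hw : w ∈ addableHooks a Z) :
    removeHook a (addHook a Z w) (w + a) = Z := by
  rw [mem_addableHooks] at hw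
  ext t
  simp only [mem_removeHook, addHook, mem_insert, mem_erase, Nat.add_sub_cancel]
  grind

theorem card_addableHooks (hZ : removableHooks a Z = ∅) (ha : range a ⊆ Z) :
    (addableHooks a Z).card = a := by
  have h1 := card_filter_add_card_filter_not (s := Z) (fun w => w + a ∈ Z)
  have h2 := card_filter_add_card_filter_not (s := Z) (fun z => z < a)
  -- `Z` has no removable `a`-hook, so `z ∈ Z` with `a ≤ z` forces `z - a ∈ Z`.
  have h3 : Z.filter (fun z => ¬z < a) =
      (Z.filter (fun w => w + a ∈ Z)).map (addRightEmbedding a) := by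
    ext z
    simp only [mem_filter, mem_map, addRightEmbedding_apply]
    constructor
    · rintro ⟨hz, hza⟩
      refine ⟨z - a, ⟨by_contra fun h => ?_, by rwa [Nat.sub_add_cancel (by omega)]⟩, by omega⟩
      simpa [hZ] using mem_removableHooks.2 ⟨hz, (by omega : a ≤ z), h⟩
    · rintro ⟨w, ⟨-, hw⟩, rfl⟩
      exact ⟨hw, by omega⟩
  have h4 : Z.filter (fun z => z < a) = range a := by
    ext z
    simp only [mem_filter, mem_range]
    exact ⟨And.right, fun h => ⟨ha (mem_range.2 h), h⟩⟩
  rw [h3, card_map, h4, card_range] at h2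
  rw [addableHooks]
  omega

theorem card_addHook (hw : w ∈ addableHooks a Z) : (addHook a Z w).card = Z.card := by
  rw [← card_removeHook (add_mem_removableHooks_addHook hw), removeHook_addHook hw]

theorem weight_addHook (hw : w ∈ addableHooks a Z) : weight (addHook a Z w) = weight Z + a := by
  rw [← weight_removeHook (add_mem_removableHooks_addHook hw), removeHook_addHook hw]

theorem numPaths_addHook (hZ : weight Z < a) (hw : w ∈ addableHooks a Z) (r : List ℕ) :
    numPaths (addHook a Z w) (a :: r) = numPaths Z r := by
  rw [numPaths_cons_of_mem (by rw [weight_addHook hw]; omega) (add_mem_removableHooks_addHook hw),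
    removeHook_addHook hw]

theorem addHook_removeHook {x : ℕ} (hx : x ∈ removableHooks a X) :
    x - a ∈ addableHooks a (removeHook a X x) ∧ addHook a (removeHook a X x) (x - a) = X := by
  rw [mem_removableHooks] at hx
  refine ⟨?_, ?_⟩
  · simp only [mem_addableHooks, mem_removeHook, Nat.sub_add_cancel hx.2.1]
    grind
  · ext t
    simp only [addHook, removeHook, mem_insert, mem_erase, Nat.sub_add_cancel hx.2.1]
    grind

theorem addHook_injOn : Set.InjOn (addHook a Z) (addableHooks a Z) := fun w hw w' hw' h => by
  rw [mem_coe, mem_addableHooks] at hw hw'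
  have := congrArg (w ∈ ·) h
  simp only [addHook, mem_insert, mem_erase] at this
  grind

theorem eq_of_addHook_eq {w' : ℕ} {Z' : Finset ℕ} (hZ : weight Z < a) (hw : w ∈ addableHooks a Z)
    (hw' : w' ∈ addableHooks a Z') (h : addHook a Z w = addHook a Z' w') : Z = Z' := by
  have hY : weight (addHook a Z w) < 2 * a := by rw [weight_addHook hw]; omega
  have h1 := add_mem_removableHooks_addHook hw
  have h2 := add_mem_removableHooks_addHook hw'
  rw [← h] at h2
  have := card_le_one.1 (card_removableHooks_le_one hY) _ h1 _ h2
  rw [← removeHook_addHook hw, ← removeHook_addHook hw', ← h, this]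

theorem filter_betaSets_numPaths_cons {N s : ℕ} (hs : s < a) (r : List ℕ) :
    (betaSets N (a + s)).filter (numPaths · (a :: r) ≠ 0) =
      ((betaSets N s).filter (numPaths · r ≠ 0)).biUnion
        fun Z => (addableHooks a Z).image (addHook a Z) := by
  ext Y
  simp only [mem_filter, mem_biUnion, mem_image, mem_betaSets]
  constructor
  · rintro ⟨⟨hcard, hw⟩, hY⟩
    rw [numPaths_cons] at hY
    obtain ⟨x, hx, hxY⟩ := exists_ne_zero_of_sum_ne_zero hY
    have := weight_removeHook hx
    obtain ⟨hxa, hxY'⟩ := addHook_removeHook hx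
    exact ⟨_, ⟨⟨(card_removeHook hx).trans hcard, by omega⟩, hxY⟩, _, hxa, hxY'⟩
  · rintro ⟨Z, ⟨⟨hcard, hw⟩, hZ⟩, w, hwZ, rfl⟩
    refine ⟨⟨(card_addHook hwZ).trans hcard, by rw [weight_addHook hwZ]; omega⟩, ?_⟩
    rwa [numPaths_addHook (by omega) hwZ]

theorem card_filter_betaSets_numPaths {l : List ℕ} (hl : Superincreasing l) {N : ℕ}
    (hN : l.sum ≤ N) : ((betaSets N l.sum).filter (numPaths · l ≠ 0)).card = l.prod := by
  induction l with
  | nil =>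
    suffices (betaSets N 0).filter (numPaths · [] ≠ 0) = {range N} by simp [this]
    ext Y
    simp only [mem_filter, mem_betaSets, weight_eq_zero_iff, numPaths_nil, mem_singleton]
    constructor
    · rintro ⟨⟨rfl, h⟩, -⟩
      exact h
    · rintro rfl
      simp
  | cons a r ih =>
    obtain ⟨hra, hr⟩ := hl
    rw [List.sum_cons] at hN ⊢
    rw [filter_betaSets_numPaths_cons hra, card_biUnion, sum_congr rfl, sum_const, smul_eq_mul,
      ih hr (by omega), List.prod_cons, mul_comm]
    · intro Z hZ
      rw [mem_filter, mem_betaSets] at hZ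
      rw [card_image_of_injOn addHook_injOn, card_addableHooks
        (removableHooks_eq_empty (by omega)) (range_subset_of_weight_add_le_card (by omega))]
    · intro Z hZ Z' hZ' hne
      simp only [Function.onFun, disjoint_left, mem_image]
      rintro Y ⟨w, hw, rfl⟩ ⟨w', hw', h⟩
      rw [mem_coe, mem_filter, mem_betaSets] at hZ
      exact hne (eq_of_addHook_eq (by omega) hw hw' h.symm)

theorem betaSet_nil : betaSet [] = ∅ := rfl

theorem betaSet_cons (a : ℕ) (L : List ℕ) :
    betaSet (a :: L) = insert (a + L.length) (betaSet L) := by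
  simp only [betaSet, List.mapIdx_cons, List.toFinset_cons, List.length_cons]
  congr 3
  funext i b
  omega

theorem lt_of_mem_betaSet (hL : ∀ b ∈ L, b ≤ a) (hx : x ∈ betaSet L) :
    x < a + L.length := by
  induction L with
  | nil => simp [betaSet_nil] at hx
  | cons b L ih =>
    simp only [List.mem_cons, forall_eq_or_imp] at hL
    rw [betaSet_cons, mem_insert] at hx
    rw [List.length_cons]
    rcases hx with rfl | hx
    · omega
    · have := ih hL.2 hx
      omega

theorem add_length_notMem_betaSet (hL : ∀ b ∈ L, b ≤ a) :
    a + L.length ∉ betaSet L := fun h => (lt_of_mem_betaSet hL h).false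

theorem card_betaSet (hL : L.Pairwise (· ≥ ·)) : (betaSet L).card = L.length := by
  induction L with
  | nil => rfl
  | cons a L ih =>
    rw [List.pairwise_cons] at hL
    rw [betaSet_cons, card_insert_of_notMem (add_length_notMem_betaSet hL.1), ih hL.2,
      List.length_cons]

theorem weight_betaSet (hL : L.Pairwise (· ≥ ·)) : weight (betaSet L) = L.sum := by
  suffices ∑ x ∈ betaSet L, x = L.sum + L.length.choose 2 by
    have := weight_add_choose (betaSet L)
    rw [card_betaSet hL] at this
    omega
  induction L with
  | nil => rfl
  | cons a L ih =>
    rw [List.pairwise_cons] at hL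
    rw [betaSet_cons, sum_insert (add_length_notMem_betaSet hL.1), ih hL.2, List.sum_cons,
      List.length_cons, choose_two_add_one]
    ring

theorem zero_notMem_betaSet (hL : ∀ b ∈ L, 0 < b) : 0 ∉ betaSet L := by
  induction L with
  | nil => simp [betaSet_nil]
  | cons a L ih =>
    simp only [List.mem_cons, forall_eq_or_imp] at hL
    rw [betaSet_cons, mem_insert, not_or]
    exact ⟨by omega, ih hL.2⟩

theorem betaSet_inj {L' : List ℕ} (hL : L.Pairwise (· ≥ ·)) (hL' : L'.Pairwise (· ≥ ·))
    (h : betaSet L = betaSet L') : L = L' := by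
  induction L generalizing L' with
  | nil =>
    have := card_betaSet hL'
    rw [← h, betaSet_nil, card_empty] at this
    exact (List.length_eq_zero_iff.1 this.symm).symm
  | cons a L ih =>
    rcases L' with _ | ⟨b, L'⟩
    · simp [betaSet_cons, betaSet_nil] at h
    rw [List.pairwise_cons] at hL hL'
    have hlen : L.length = L'.length := by
      simpa using (card_betaSet (List.pairwise_cons.2 hL)).symm.trans
        ((congrArg card h).trans (card_betaSet (List.pairwise_cons.2 hL')))
    rw [betaSet_cons, betaSet_cons] at h
    have hab : a = b := by
      have h1 := h ▸ mem_insert_self (a + L.length) (betaSet L)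
      have h2 := h.symm ▸ mem_insert_self (b + L'.length) (betaSet L')
      rw [mem_insert] at h1 h2
      rcases h1 with h1 | h1
      · omega
      rcases h2 with h2 | h2
      · omega
      have := lt_of_mem_betaSet hL.1 h2
      have := lt_of_mem_betaSet hL'.1 h1
      omega
    subst hab
    have := congrArg (·.erase (a + L.length)) h
    rw [erase_insert (add_length_notMem_betaSet hL.1), hlen,
      erase_insert (add_length_notMem_betaSet hL'.1)] at this
    rw [ih hL.2 hL'.2 this]

theorem exists_betaSet_eq {Z : Finset ℕ} (hZ : 0 ∉ Z) :
    ∃ L : List ℕ, L.Pairwise (· ≥ ·) ∧ (∀ b ∈ L, 0 < b) ∧ betaSet L = Z := by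
  induction Z using Finset.induction_on_max with
  | empty => exact ⟨[], by simp, by simp, rfl⟩
  | insert m s hlt ih =>
    obtain ⟨L, hL, hpos, rfl⟩ := ih fun h => hZ (mem_insert_of_mem h)
    have hm : 0 < m := Nat.pos_of_ne_zero fun h => hZ (h ▸ mem_insert_self _ _)
    have hbound : L.length < m ∧ ∀ b ∈ L, b + L.length ≤ m := by
      rcases L with _ | ⟨c, L⟩
      · simpa using hm
      have hc := hlt _ ((betaSet_cons c L).symm ▸ mem_insert_self _ _)
      have hc0 := hpos c (by simp)
      rw [List.pairwise_cons] at hL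
      simp only [List.mem_cons, forall_eq_or_imp, List.length_cons]
      exact ⟨by omega, by omega, fun b hb => by have := hL.1 b hb; omega⟩
    refine ⟨(m - L.length) :: L, List.pairwise_cons.2 ⟨fun b hb => ?_, hL⟩, ?_, ?_⟩
    · have := hbound.2 b hb
      omega
    · simp only [List.mem_cons, forall_eq_or_imp]
      exact ⟨by omega, hpos⟩
    · rw [betaSet_cons, Nat.sub_add_cancel hbound.1.le]

theorem pairwise_sortedParts (lam : n.Partition) : (sortedParts lam).Pairwise (· ≥ ·) :=
  List.pairwise_reverse.2 (Multiset.pairwise_sort _ _)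

theorem pos_of_mem_sortedParts {lam : n.Partition} {b : ℕ} (hb : b ∈ sortedParts lam) : 0 < b :=
  lam.parts_pos (by simpa [sortedParts] using hb)

theorem coe_sortedParts (lam : n.Partition) : (sortedParts lam : Multiset ℕ) = lam.parts := by
  rw [sortedParts, Multiset.coe_reverse, Multiset.sort_eq]

theorem sortedParts_eq {lam : n.Partition} {L : List ℕ} (hL : L.Pairwise (· ≥ ·))
    (h : lam.parts = L) : sortedParts lam = L :=
  List.Perm.eq_of_pairwise' (pairwise_sortedParts lam) hL
    (Multiset.coe_eq_coe.1 ((coe_sortedParts lam).trans h))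

theorem sum_sortedParts (lam : n.Partition) : (sortedParts lam).sum = n := by
  rw [← Multiset.sum_coe, coe_sortedParts, lam.parts_sum]

theorem zero_notMem_betaSet_sortedParts (lam : n.Partition) : 0 ∉ betaSet (sortedParts lam) :=
  zero_notMem_betaSet fun _ => pos_of_mem_sortedParts

theorem weight_betaSet_sortedParts (lam : n.Partition) :
    weight (betaSet (sortedParts lam)) = n := by
  rw [weight_betaSet (pairwise_sortedParts lam), sum_sortedParts]

theorem length_sortedParts_le (lam : n.Partition) : (sortedParts lam).length ≤ n := by
  rw [← card_betaSet (pairwise_sortedParts lam)]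
  exact (card_le_weight (zero_notMem_betaSet_sortedParts lam)).trans_eq
    (weight_betaSet_sortedParts lam)

theorem betaSet_sortedParts_injective :
    Function.Injective fun lam : n.Partition => betaSet (sortedParts lam) := fun lam mu h =>
  Nat.Partition.ext <| by
    rw [← coe_sortedParts, ← coe_sortedParts,
      betaSet_inj (pairwise_sortedParts lam) (pairwise_sortedParts mu) h]

theorem exists_betaSet_sortedParts_eq {Z : Finset ℕ} (hZ : 0 ∉ Z) (hw : weight Z = n) :
    ∃ lam : n.Partition, betaSet (sortedParts lam) = Z := by
  obtain ⟨L, hL, hpos, rfl⟩ := exists_betaSet_eq hZ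
  have hsum : (L : Multiset ℕ).sum = n := by rw [Multiset.sum_coe, ← weight_betaSet hL, hw]
  refine ⟨⟨L, fun hb => hpos _ (Multiset.mem_coe.1 hb), hsum⟩, ?_⟩
  rw [sortedParts_eq hL rfl]

def paddedBetaSet (N : ℕ) (lam : n.Partition) : Finset ℕ :=
  shift^[N - (sortedParts lam).length] (betaSet (sortedParts lam))

theorem paddedBetaSet_mem_betaSets {N : ℕ} (hn : n ≤ N) (lam : n.Partition) :
    paddedBetaSet N lam ∈ betaSets N n := by
  have := length_sortedParts_le lam
  rw [mem_betaSets, paddedBetaSet, card_shift_iterate, card_betaSet (pairwise_sortedParts lam),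
    weight_shift_iterate, weight_betaSet_sortedParts]
  exact ⟨by omega, rfl⟩

theorem paddedBetaSet_injective (N : ℕ) :
    Function.Injective (paddedBetaSet N : n.Partition → Finset ℕ) := fun lam mu h =>
  betaSet_sortedParts_injective (shift_iterate_inj (zero_notMem_betaSet_sortedParts lam)
    (zero_notMem_betaSet_sortedParts mu) h).2

theorem exists_paddedBetaSet_eq {N : ℕ} {Y : Finset ℕ} (hY : Y ∈ betaSets N n) :
    ∃ lam : n.Partition, paddedBetaSet N lam = Y := by
  obtain ⟨j, X, hX, rfl⟩ := exists_eq_shift_iterate Y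
  rw [mem_betaSets, card_shift_iterate, weight_shift_iterate] at hY
  obtain ⟨lam, hlam⟩ := exists_betaSet_sortedParts_eq hX hY.2
  refine ⟨lam, ?_⟩
  rw [paddedBetaSet, hlam, ← card_betaSet (pairwise_sortedParts lam), hlam]
  congr
  omega

theorem card_numPaths_ne_zero {l : List ℕ} (hl : Superincreasing l) (hn : l.sum = n) :
    Nat.card {lam : n.Partition // numPaths (betaSet (sortedParts lam)) l ≠ 0} = l.prod := by
  subst hn
  rw [← card_filter_betaSets_numPaths hl le_rfl, Nat.card_eq_fintype_card, Fintype.card_subtype]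
  refine card_nbij (paddedBetaSet l.sum) (fun lam hlam => ?_)
    ((paddedBetaSet_injective _).injOn) (fun Y hY => ?_)
  · simp only [mem_coe, mem_filter, mem_univ, true_and] at hlam ⊢
    rw [paddedBetaSet, numPaths_shift_iterate]
    exact ⟨paddedBetaSet_mem_betaSets le_rfl lam, hlam⟩
  · simp only [mem_coe, mem_filter] at hY
    obtain ⟨lam, rfl⟩ := exists_paddedBetaSet_eq hY.1
    refine ⟨lam, ?_, rfl⟩
    simp only [mem_coe, mem_filter, mem_univ, true_and]
    rw [paddedBetaSet, numPaths_shift_iterate] at hY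
    exact hY.2

end BetaSet

open BetaSet

theorem support_of_binary_type_is_odd_degree_chars_general (n : ℕ) (l : List ℕ)
    (hl : List.Chain' (· > ·) l) (hsum : (l.map (fun r => 2 ^ r)).sum = n)
    (μ : n.Partition) (hμ : μ.parts = (l.map (fun r => 2 ^ r) : List ℕ)) :
    {lam : n.Partition | charValue lam μ ≠ 0} =
      {lam : n.Partition | Odd (numPaths (betaSet (sortedParts lam)) (List.replicate n 1))} ∧
    Nat.card {lam : n.Partition // charValue lam μ ≠ 0} = 2 ^ l.sum := by
  have hl' : l.Pairwise (· > ·) := List.isChain_iff_pairwise.1 hl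
  have hsi := superincreasing_map_two_pow hl'
  have hμ' : sortedParts μ = l.map (2 ^ ·) :=
    sortedParts_eq (hl'.map _ fun _ _ h => Nat.pow_le_pow_right two_pos h.le) hμ
  have hle (lam : n.Partition) : numPaths (betaSet (sortedParts lam)) (l.map (2 ^ ·)) ≤ 1 :=
    numPaths_le_one hsi ((weight_betaSet_sortedParts lam).trans hsum.symm)
  have hchar (lam : n.Partition) :
      charValue lam μ ≠ 0 ↔ numPaths (betaSet (sortedParts lam)) (l.map (2 ^ ·)) ≠ 0 := by
    rw [charValue, hμ', charList_ne_zero_iff (hle lam)]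
  have hodd (lam : n.Partition) : Odd (numPaths (betaSet (sortedParts lam)) (List.replicate n 1)) ↔
      numPaths (betaSet (sortedParts lam)) (l.map (2 ^ ·)) ≠ 0 := by
    have h := odd_numPaths_replicate_sum_two_pow_iff l (betaSet (sortedParts lam))
    rw [hsum] at h
    rw [h, Nat.odd_iff]
    have := hle lam
    omega
  refine ⟨Set.ext fun lam => (hchar lam).trans (hodd lam).symm, ?_⟩
  rw [Nat.card_congr (Equiv.subtypeEquivRight hchar), card_numPaths_ne_zero hsi hsum]
  exact prod_map_two_pow l

/-- Write `n = 2^{r₁} + ⋯ + 2^{r_t}` in binary, `r₁ > ⋯ > r_t ≥ 0`, and let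
`μ = (2^{r₁}, …, 2^{r_t})`.  The set of partitions `lam` of `n` with
`χ^lam(μ) ≠ 0` is exactly the set of `lam` for which `χ^lam` has odd degree
(the degree being the number of standard Young tableaux of shape `lam`, i.e.
the number of ways of removing `n` `1`-hooks), and this set has cardinality
`2^{r₁ + ⋯ + r_t}`. -/
theorem support_of_binary_type_is_odd_degree_chars (n : ℕ) (hn : 1 ≤ n) (l : List ℕ)
    (hl : List.Chain' (· > ·) l) (hsum : (l.map (fun r => 2 ^ r)).sum = n)
    (μ : n.Partition) (hμ : μ.parts = (l.map (fun r => 2 ^ r) : List ℕ)) :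
    {lam : n.Partition | charValue lam μ ≠ 0} =
      {lam : n.Partition | Odd (numPaths (betaSet (sortedParts lam)) (List.replicate n 1))} ∧
    Nat.card {lam : n.Partition // charValue lam μ ≠ 0} = 2 ^ l.sum :=
  support_of_binary_type_is_odd_degree_chars_general n l hl hsum μ hμ
end

section
/- Write n = 2^{r_1} + ... + 2^{r_t} in binary, r_1 > ... > r_t ≥ 0, and let P be a Sylow 2-subgroup of S_n. Then |P/P'| = 2^{r_1 + r_2 + ... + r_t}, where P' is the commutator subgroup of P. -/
/-!
Write `n = 2^{r₁} + ⋯ + 2^{r_t}`. The binary digits of the summands do not overlap, so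
Legendre's formula `v₂(n!) = n - s₂(n)` gives `v₂(n!) = Σ v₂((2^{r_i})!)`. Hence a product of
Sylow 2-subgroups of the `S_{2^{r_i}}`, acting on the blocks of a partition of `n` points, is a
Sylow 2-subgroup of `S_n`. A Sylow 2-subgroup of `S_{2^r}` is the iterated wreath product
`C₂ ≀ ⋯ ≀ C₂`, and `(D ≀ Q)^{ab} ≅ D^{ab} × Q^{ab}` for finite `Q` via `(f, q) ↦ (∏ₓ f x, q)`,
so its abelianization has order `2^r`.
-/

open Equiv

instance Abelianization.instSubsingleton (G : Type*) [Group G] [Subsingleton G] :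
    Subsingleton (Abelianization G) :=
  inferInstanceAs (Subsingleton (G ⧸ commutator G))

def Abelianization.prodEquiv (G H : Type*) [Group G] [Group H] :
    Abelianization (G × H) ≃* Abelianization G × Abelianization H :=
  MonoidHom.toMulEquiv (lift (of.prodMap of))
    ((map (MonoidHom.inl G H)).coprod (map (MonoidHom.inr G H)))
    (hom_ext _ _ (MonoidHom.ext fun x ↦ by simp [← map_mul]))
    (by
      rw [MonoidHom.comp_coprod, ← MonoidHom.coprod_inl_inr]
      congr 1 <;> refine hom_ext _ _ ?_ <;> ext <;> simp)

namespace RegularWreathProduct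

variable {D Q : Type*} [Group D] [Group Q]

def baseHom : (Q → D) →* D ≀ᵣ Q where
  toFun f := ⟨f, 1⟩
  map_one' := rfl
  map_mul' f g := by ext <;> simp [mul_def]

@[simp] theorem left_baseHom (f : Q → D) : (baseHom f).left = f := rfl

@[simp] theorem right_baseHom (f : Q → D) : (baseHom f).right = 1 := rfl

theorem baseHom_mul_inl (w : D ≀ᵣ Q) : baseHom w.left * inl w.right = w := by
  ext <;> simp [mul_def]

theorem hom_ext {M : Type*} [Monoid M] {φ ψ : D ≀ᵣ Q →* M}
    (hbase : φ.comp baseHom = ψ.comp baseHom) (hinl : φ.comp inl = ψ.comp inl) : φ = ψ := by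
  ext w
  rw [← baseHom_mul_inl w, map_mul, map_mul]
  exact congr_arg₂ (· * ·) (DFunLike.congr_fun hbase _) (DFunLike.congr_fun hinl _)

theorem inl_mul_baseHom_mul_inv_inl (q : Q) (f : Q → D) :
    inl q * baseHom f * (inl q)⁻¹ = baseHom (fun x ↦ f (q⁻¹ * x)) := by
  ext <;> simp [mul_def]

theorem of_baseHom_mulSingle [DecidableEq Q] (x : Q) (d : D) :
    Abelianization.of (baseHom (Pi.mulSingle x d)) =
      Abelianization.of (baseHom (Pi.mulSingle (1 : Q) d)) := by
  have hconj :
      baseHom (Pi.mulSingle x d) = inl x * baseHom (Pi.mulSingle (1 : Q) d) * (inl x)⁻¹ := by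
    rw [inl_mul_baseHom_mul_inv_inl]
    congr 1
    ext y
    simp [Pi.mulSingle_apply, inv_mul_eq_one, eq_comm]
  rw [hconj, map_mul, map_mul, mul_comm, ← mul_assoc, map_inv, inv_mul_cancel, one_mul]

variable [Fintype Q]

def abelianizationHom : D ≀ᵣ Q →* Abelianization D × Abelianization Q where
  toFun w := (∏ x, Abelianization.of (w.left x), Abelianization.of w.right)
  map_one' := by simp
  map_mul' a b := by
    simp only [mul_def, Pi.mul_apply, map_mul, Finset.prod_mul_distrib, Prod.mk_mul_mk]
    congr 2
    exact Fintype.prod_equiv (Equiv.mulLeft a.right⁻¹) _ _ fun _ ↦ rfl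

def abelianizationEquiv [DecidableEq Q] :
    Abelianization (D ≀ᵣ Q) ≃* Abelianization D × Abelianization Q :=
  MonoidHom.toMulEquiv (Abelianization.lift abelianizationHom)
    ((Abelianization.map (baseHom.comp (MonoidHom.mulSingle (fun _ : Q ↦ D) 1))).coprod
      (Abelianization.map inl))
    (by
      refine Abelianization.hom_ext _ _ (hom_ext (MonoidHom.pi_ext fun x d ↦ ?_) ?_)
      · simp only [MonoidHom.comp_apply, Abelianization.lift_apply_of, abelianizationHom]
        rw [of_baseHom_mulSingle]
        simp [Pi.mulSingle_apply, apply_ite]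
      · ext q
        simp [abelianizationHom])
    (by
      rw [MonoidHom.comp_coprod, ← MonoidHom.coprod_inl_inr]
      congr 1 <;> refine Abelianization.hom_ext _ _ ?_ <;> ext <;>
        simp [abelianizationHom, Pi.mulSingle_apply, apply_ite])

end RegularWreathProduct

theorem IteratedWreathProduct.card_abelianization (G : Type*) [Group G] [Finite G] (n : ℕ) :
    Nat.card (Abelianization (IteratedWreathProduct G n)) = Nat.card (Abelianization G) ^ n := by
  induction n with
  | zero =>
    have : Subsingleton (IteratedWreathProduct G 0) := inferInstanceAs (Subsingleton PUnit)
    rw [pow_zero, Nat.card_eq_one_iff_unique]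
    exact ⟨inferInstance, inferInstance⟩
  | succ n ih =>
    classical
    have := Fintype.ofFinite G
    rw [pow_succ, ← ih, ← Nat.card_prod]
    exact Nat.card_congr (RegularWreathProduct.abelianizationEquiv
      (D := IteratedWreathProduct G n) (Q := G)).toEquiv

theorem Nat.sum_digits_two_eq_length_bitIndices (n : ℕ) :
    (Nat.digits 2 n).sum = n.bitIndices.length := by
  induction n using Nat.binaryRec with
  | zero => simp
  | bit b n ih =>
    rcases n.eq_zero_or_pos with rfl | hn
    · cases b <;> simp
    have hpos : 0 < Nat.bit b n := by cases b <;> simp only [Nat.bit, cond] <;> omega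
    rw [Nat.digits_def' one_lt_two hpos, List.sum_cons, Nat.bit_mod_two, Nat.bit_div_two, ih]
    cases b
    · rw [Nat.bitIndices_bit_false]
      simp
    · rw [Nat.bitIndices_bit_true]
      simp [add_comm]

theorem Nat.factorization_two_factorial (n : ℕ) :
    n.factorial.factorization 2 = n - n.bitIndices.length := by
  have := sub_one_mul_padicValNat_factorial (p := 2) n
  rw [Nat.factorization_def _ Nat.prime_two, ← Nat.sum_digits_two_eq_length_bitIndices]
  simpa using this

theorem Nat.length_bitIndices_sum_map_two_pow {l : List ℕ} (hl : l.SortedGT) :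
    (l.map (2 ^ ·)).sum.bitIndices.length = l.length := by
  rw [← List.sum_reverse, ← List.map_reverse, Nat.bitIndices_sum_map_two_pow hl.reverse,
    List.length_reverse]

theorem Nat.factorization_two_factorial_two_pow_add {r : ℕ} {t : List ℕ}
    (hl : (r :: t).SortedGT) :
    (2 ^ r + (t.map (2 ^ ·)).sum).factorial.factorization 2 =
      (2 ^ r).factorial.factorization 2 + (t.map (2 ^ ·)).sum.factorial.factorization 2 := by
  set m := (t.map (2 ^ ·)).sum
  have ht : t.SortedGT := (List.sortedGT_iff_pairwise.1 hl).of_cons.sortedGT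
  have hlen : (2 ^ r + m).bitIndices.length = t.length + 1 := by
    simpa [m] using Nat.length_bitIndices_sum_map_two_pow hl
  have hlen_t : m.bitIndices.length = t.length := Nat.length_bitIndices_sum_map_two_pow ht
  have hlen_le : m.bitIndices.length ≤ m :=
    Nat.sum_digits_two_eq_length_bitIndices m ▸ Nat.digit_sum_le 2 m
  have := Nat.one_le_two_pow (n := r)
  simp only [Nat.factorization_two_factorial, Nat.bitIndices_two_pow, List.length_singleton]
  omega

namespace Sylow

variable {p : ℕ} [Fact p.Prime]

theorem card_abelianization_of_card_eq_prime_pow {α : Type*} [Finite α] {n : ℕ}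
    (hα : Nat.card α = p ^ n) (P : Sylow p (Perm α)) : Nat.card (Abelianization P) = p ^ n := by
  rw [Nat.card_congr (mulEquivIteratedWreathProduct p n α hα (Multiplicative (ZMod p))
      (by simp) P).abelianizationCongr.toEquiv, IteratedWreathProduct.card_abelianization,
    ← Nat.card_congr Abelianization.equivOfComm.toEquiv]
  simp

variable {G : Type*} [Group G] [Finite G]

noncomputable def mulEquivOfInjective (P : Sylow p G) {K : Type*} [Group K] {f : K →* G}
    (hf : Function.Injective f) (hK : Nat.card K = p ^ (Nat.card G).factorization p) :
    P ≃* K :=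
  let e := MonoidHom.ofInjective hf
  (P.equiv (ofCard f.range (by rw [← hK, ← Nat.card_congr e.toEquiv]))).trans e.symm

noncomputable def mulEquivProdOfEquivSum {α β γ : Type*} [Finite α] [Finite β] [Finite γ]
    (e : γ ≃ α ⊕ β)
    (h : (Nat.card α + Nat.card β).factorial.factorization p =
      (Nat.card α).factorial.factorization p + (Nat.card β).factorial.factorization p)
    (P : Sylow p (Perm γ)) (P₁ : Sylow p (Perm α)) (P₂ : Sylow p (Perm β)) : P ≃* P₁ × P₂ :=
  P.mulEquivOfInjective
    (f := (e.symm.permCongrHom.toMonoidHom.comp (Perm.sumCongrHom α β)).comp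
      ((P₁ : Subgroup (Perm α)).subtype.prodMap (P₂ : Subgroup (Perm β)).subtype))
    ((e.symm.permCongrHom.injective.comp Perm.sumCongrHom_injective).comp
      (Subtype.val_injective.prodMap Subtype.val_injective))
    (by
      rw [Nat.card_prod, card_eq_multiplicity, card_eq_multiplicity, ← pow_add, Nat.card_perm,
        Nat.card_perm, Nat.card_perm, Nat.card_congr e, Nat.card_sum, h])

universe u in
theorem card_abelianization_perm_of_sortedGT {l : List ℕ} (hl : l.SortedGT) {α : Type u}
    [Finite α] (hα : Nat.card α = (l.map (2 ^ ·)).sum) (P : Sylow 2 (Perm α)) :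
    Nat.card (Abelianization P) = 2 ^ l.sum := by
  induction l generalizing α with
  | nil =>
    have : IsEmpty α := Finite.card_eq_zero_iff.1 hα
    rw [List.sum_nil, pow_zero, Nat.card_eq_one_iff_unique]
    exact ⟨inferInstance, inferInstance⟩
  | cons r t ih =>
    let m := (t.map (2 ^ ·)).sum
    obtain ⟨P₁⟩ : Nonempty (Sylow 2 (Perm (Fin (2 ^ r)))) := inferInstance
    -- `ULift` puts the second block in universe `u`, where the induction hypothesis lives.
    obtain ⟨P₂⟩ : Nonempty (Sylow 2 (Perm (ULift.{u} (Fin m)))) := inferInstance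
    obtain ⟨e⟩ : Nonempty (α ≃ Fin (2 ^ r) ⊕ ULift.{u} (Fin m)) :=
      Finite.card_eq.1 (by simpa using hα)
    have hfact := Nat.factorization_two_factorial_two_pow_add hl
    rw [Nat.card_congr
        (P.mulEquivProdOfEquivSum e (by simpa using hfact) P₁ P₂).abelianizationCongr.toEquiv,
      Nat.card_congr (Abelianization.prodEquiv _ _).toEquiv, Nat.card_prod,
      card_abelianization_of_card_eq_prime_pow (Nat.card_fin _) P₁,
      ih (List.sortedGT_iff_pairwise.1 hl).of_cons.sortedGT (by simp [m]) P₂, List.sum_cons,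
      pow_add]

end Sylow

/-- Write `n = 2^{r₁} + ⋯ + 2^{r_t}` in binary, `r₁ > ⋯ > r_t ≥ 0`, and let
`P` be a Sylow `2`-subgroup of `S_n`.  Then `|P/P'| = 2^{r₁ + ⋯ + r_t}`,
where `P'` is the commutator subgroup of `P`. -/
theorem sylow_two_abelianization_card (n : ℕ) (l : List ℕ)
    (hl : List.Chain' (· > ·) l) (hsum : (l.map (fun r => 2 ^ r)).sum = n)
    (P : Sylow 2 (Equiv.Perm (Fin n))) :
    Nat.card (Abelianization ↥(P : Subgroup (Equiv.Perm (Fin n)))) = 2 ^ l.sum :=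
  Sylow.card_abelianization_perm_of_sortedGT hl.sortedGT (by rw [Nat.card_fin, hsum]) P
end
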